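/- arXiv:2602.16434 — 7 statements merged into one kernel-verified Lean document; each statement's English description precedes it below -/
import Mathlib

section
/- Let k be a perfect field of characteristic p > 0 and let f \in k(X) have Cartier decomposition f = \sum_{i=0}^{p-1} f_i^p X^i. Then there exists a rational function h \in k(X) whose formal derivative equals f (i.e. the form f dX is exact) if and only if f_{p-1} = 0. -/
/-- The formal derivative of a rational function `f = num/denom`, given by the
quotient rule `f' = (num' * denom - num * denom') / denom^2`. -/
noncomputable def ratDeriv {k : Type*} [Field k] (f : RatFunc k) : RatFunc k :=
  (algebraMap (Polynomial k) (RatFunc k) (Polynomial.derivative f.num) *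
      algebraMap (Polynomial k) (RatFunc k) f.denom -
    algebraMap (Polynomial k) (RatFunc k) f.num *
      algebraMap (Polynomial k) (RatFunc k) (Polynomial.derivative f.denom)) /
    algebraMap (Polynomial k) (RatFunc k) f.denom ^ 2

namespace CartierAux

open Polynomial

variable {k : Type*} [Field k]

local notation "aM" => algebraMap (Polynomial k) (RatFunc k)

lemma quotRule (a b n d : k[X]) (h1 : a * d = n * b) :
    (derivative n * d - n * derivative d) * b^2 = (derivative a * b - a * derivative b) * d^2 := by
  have h2 : derivative a * d + a * derivative d = derivative n * b + n * derivative b := by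
    have := congrArg derivative h1
    simpa [derivative_mul] using this
  linear_combination (-(b*d)) * h2 + (derivative b * d + b * derivative d) * h1

lemma aM_ne_zero {b : k[X]} (hb : b ≠ 0) : aM b ≠ 0 := by
  simpa using (map_ne_zero_iff _ (RatFunc.algebraMap_injective k)).mpr hb

lemma ratDeriv_div (a b : k[X]) (hb : b ≠ 0) :
    ratDeriv (aM a / aM b) =
      (aM (derivative a) * aM b - aM a * aM (derivative b)) / aM b ^ 2 := by
  set f := aM a / aM b with hf
  have hd : (f.denom : k[X]) ≠ 0 := f.denom_ne_zero
  have hbd : aM b ≠ 0 := aM_ne_zero hb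
  have hdd : aM f.denom ≠ 0 := aM_ne_zero hd
  have key : a * f.denom = f.num * b := by
    apply RatFunc.algebraMap_injective k
    simp only [map_mul]
    rw [← div_eq_div_iff hbd hdd]
    exact (RatFunc.num_div_denom f).symm
  have E := quotRule a b f.num f.denom key
  have E' := congrArg aM E
  simp only [map_mul, map_sub, map_pow] at E'
  show (aM (derivative f.num) * aM f.denom - aM f.num * aM (derivative f.denom)) / aM f.denom ^ 2 = _
  rw [div_eq_div_iff (pow_ne_zero 2 hdd) (pow_ne_zero 2 hbd)]
  linear_combination E'

lemma ratDeriv_add' (a b c d : k[X]) (hb : b ≠ 0) (hd : d ≠ 0) :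
    ratDeriv (aM a / aM b + aM c / aM d) = ratDeriv (aM a / aM b) + ratDeriv (aM c / aM d) := by
  have h1 : aM a / aM b + aM c / aM d = aM (a * d + c * b) / aM (b * d) := by
    rw [div_add_div _ _ (aM_ne_zero hb) (aM_ne_zero hd), map_add, map_mul, map_mul, map_mul]
    ring
  rw [h1, ratDeriv_div _ _ (mul_ne_zero hb hd), ratDeriv_div _ _ hb, ratDeriv_div _ _ hd]
  simp only [derivative_mul, derivative_add, map_add, map_mul]
  field_simp [aM_ne_zero hb, aM_ne_zero hd]
  ring

lemma ratDeriv_add (f g : RatFunc k) : ratDeriv (f + g) = ratDeriv f + ratDeriv g := by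
  rw [← RatFunc.num_div_denom f, ← RatFunc.num_div_denom g]
  exact ratDeriv_add' _ _ _ _ f.denom_ne_zero g.denom_ne_zero

lemma ratDeriv_mul' (a b c d : k[X]) (hb : b ≠ 0) (hd : d ≠ 0) :
    ratDeriv (aM a / aM b * (aM c / aM d)) =
      ratDeriv (aM a / aM b) * (aM c / aM d) + aM a / aM b * ratDeriv (aM c / aM d) := by
  have h1 : aM a / aM b * (aM c / aM d) = aM (a * c) / aM (b * d) := by
    rw [div_mul_div_comm, map_mul, map_mul]
  rw [h1, ratDeriv_div _ _ (mul_ne_zero hb hd), ratDeriv_div _ _ hb, ratDeriv_div _ _ hd]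
  simp only [derivative_mul, map_add, map_mul]
  field_simp [aM_ne_zero hb, aM_ne_zero hd]
  ring

lemma ratDeriv_mul (f g : RatFunc k) : ratDeriv (f * g) = ratDeriv f * g + f * ratDeriv g := by
  rw [← RatFunc.num_div_denom f, ← RatFunc.num_div_denom g]
  exact ratDeriv_mul' _ _ _ _ f.denom_ne_zero g.denom_ne_zero

lemma ratDeriv_algebraMap (P : k[X]) : ratDeriv (aM P) = aM (derivative P) := by
  have := ratDeriv_div P 1 one_ne_zero
  simpa using this

/-- `ratDeriv` bundled as an additive monoid hom. -/
noncomputable def D : RatFunc k →+ RatFunc k := AddMonoidHom.mk' ratDeriv ratDeriv_add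

lemma ratDeriv_zero : ratDeriv (0 : RatFunc k) = 0 := (D (k := k)).map_zero

lemma ratDeriv_C (a : k) : ratDeriv (RatFunc.C a) = 0 := by
  rw [← RatFunc.algebraMap_C, ratDeriv_algebraMap, derivative_C, map_zero]

lemma ratDeriv_pow (f : RatFunc k) (n : ℕ) :
    ratDeriv (f ^ (n + 1)) = ((n : RatFunc k) + 1) * f ^ n * ratDeriv f := by
  induction n with
  | zero => simp [ratDeriv]
  | succ m ih =>
      rw [pow_succ, ratDeriv_mul, ih]
      push_cast
      ring

variable (p : ℕ) [CharP k p]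

lemma charP_ratFunc : CharP (RatFunc k) p :=
  charP_of_injective_algebraMap (algebraMap k (RatFunc k)).injective p

lemma ratDeriv_pow_char (hp : 0 < p) (f : RatFunc k) : ratDeriv (f ^ p) = 0 := by
  haveI := charP_ratFunc (k := k) p
  obtain ⟨m, rfl⟩ := Nat.exists_eq_succ_of_ne_zero hp.ne'
  rw [ratDeriv_pow]
  have : ((m : RatFunc k) + 1) = ((m + 1 : ℕ) : RatFunc k) := by push_cast; ring
  rw [this, CharP.cast_eq_zero (RatFunc k) (m + 1), zero_mul, zero_mul]

lemma ratDeriv_ppow_mul (hp : 0 < p) (c g : RatFunc k) :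
    ratDeriv (c ^ p * g) = c ^ p * ratDeriv g := by
  rw [ratDeriv_mul, ratDeriv_pow_char p hp, zero_mul, zero_add]

lemma iterate_ppow_mul (hp : 0 < p) (c g : RatFunc k) (m : ℕ) :
    ratDeriv^[m] (c ^ p * g) = c ^ p * ratDeriv^[m] g := by
  induction m generalizing g with
  | zero => rfl
  | succ j ih =>
      rw [Function.iterate_succ_apply, Function.iterate_succ_apply,
        ratDeriv_ppow_mul p hp, ih]

lemma iterate_algebraMap (P : k[X]) (m : ℕ) :
    ratDeriv^[m] (aM P) = aM (derivative^[m] P) := by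
  induction m generalizing P with
  | zero => rfl
  | succ j ih =>
      rw [Function.iterate_succ_apply, Function.iterate_succ_apply,
        ratDeriv_algebraMap, ih]

lemma iterate_sum {ι : Type*} (s : Finset ι) (F : ι → RatFunc k) (m : ℕ) :
    ratDeriv^[m] (∑ i ∈ s, F i) = ∑ i ∈ s, ratDeriv^[m] (F i) := by
  induction m with
  | zero => rfl
  | succ j ih =>
      rw [Function.iterate_succ_apply']
      rw [ih]
      rw [show (ratDeriv (∑ i ∈ s, ratDeriv^[j] (F i)) : RatFunc k)
            = D (∑ i ∈ s, ratDeriv^[j] (F i)) from rfl, map_sum]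
      exact Finset.sum_congr rfl fun i _ => (Function.iterate_succ_apply' _ _ _).symm

lemma iterate_derivative_char (hp : p.Prime) (P : k[X]) : derivative^[p] P = 0 := by
  ext m
  rw [coeff_iterate_derivative, coeff_zero]
  have hdvd : p ∣ (m + p).descFactorial p :=
    dvd_trans (Nat.dvd_factorial hp.pos le_rfl) (Nat.factorial_dvd_descFactorial _ _)
  rw [nsmul_eq_mul]
  have : (((m + p).descFactorial p : ℕ) : k) = 0 := (CharP.cast_eq_zero_iff k p _).mpr hdvd
  rw [this, zero_mul]

lemma iterate_ratDeriv_char (hp : p.Prime) (h : RatFunc k) : ratDeriv^[p] h = 0 := by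
  have hd : (h.denom : k[X]) ≠ 0 := h.denom_ne_zero
  have hmul : h * aM h.denom = aM h.num :=
    ((div_eq_iff (aM_ne_zero hd)).mp (RatFunc.num_div_denom h)).symm
  have hrepr : h = ((aM h.denom)⁻¹) ^ p * aM (h.num * h.denom ^ (p - 1)) := by
    symm
    rw [inv_pow, inv_mul_eq_div, div_eq_iff (pow_ne_zero _ (aM_ne_zero hd))]
    calc aM (h.num * h.denom ^ (p - 1)) = aM h.num * aM h.denom ^ (p - 1) := by
          rw [map_mul, map_pow]
      _ = h * aM h.denom * aM h.denom ^ (p - 1) := by rw [hmul]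
      _ = h * (aM h.denom ^ (p - 1) * aM h.denom) := by ring
      _ = h * aM h.denom ^ p := by
          rw [← pow_succ, Nat.sub_add_cancel hp.pos]
  rw [hrepr, iterate_ppow_mul p hp.pos, iterate_algebraMap,
    iterate_derivative_char p hp, map_zero, mul_zero]

end CartierAux

/-- Over a perfect field of characteristic `p > 0`, a rational function `f`
with Cartier decomposition `f = ∑ f_i^p X^i` is the derivative of a rational function
(i.e. `f dX` is exact) if and only if `f_{p-1} = 0`. -/
theorem exact_iff_cartier_top_eq_zero
    {k : Type*} [Field k] (p : ℕ) [CharP k p] (hp : 0 < p) [PerfectField k]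
    (f : RatFunc k) (c : Fin p → RatFunc k)
    (hf : f = ∑ i : Fin p, (c i) ^ p * RatFunc.X ^ (i : ℕ)) :
    (∃ h : RatFunc k, ratDeriv h = f) ↔ c ⟨p - 1, Nat.sub_lt hp one_pos⟩ = 0 := by
  classical
  open Polynomial CartierAux in
  haveI : CharP (RatFunc k) p := charP_ratFunc p
  have hprime : p.Prime := (CharP.char_is_prime_or_zero k p).resolve_right hp.ne'
  set i₀ : Fin p := ⟨p - 1, Nat.sub_lt hp one_pos⟩ with hi₀
  constructor
  · rintro ⟨h, rfl⟩
    -- apply ratDeriv^[p-1]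
    have h1 : ratDeriv^[p - 1] (ratDeriv h) = 0 := by
      rw [← Function.iterate_succ_apply]
      simp only [Nat.succ_eq_add_one]
      rw [Nat.sub_add_cancel hp]
      exact iterate_ratDeriv_char p hprime h
    rw [hf, iterate_sum] at h1
    -- each term
    have hterm : ∀ i : Fin p,
        ratDeriv^[p - 1] (c i ^ p * RatFunc.X ^ (i : ℕ))
          = c i ^ p * algebraMap (Polynomial k) (RatFunc k)
              (((i : ℕ).descFactorial (p - 1) : Polynomial k) * X ^ ((i : ℕ) - (p - 1))) := by
      intro i
      rw [iterate_ppow_mul p hp]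
      congr 1
      rw [show (RatFunc.X ^ (i : ℕ) : RatFunc k)
            = algebraMap (Polynomial k) (RatFunc k) (X ^ (i : ℕ)) by
          rw [map_pow, RatFunc.algebraMap_X],
        iterate_algebraMap, iterate_derivative_X_pow_eq_natCast_mul]
    rw [Finset.sum_congr rfl (fun i _ => hterm i)] at h1
    rw [Finset.sum_eq_single i₀] at h1
    · -- h1 : c i₀ ^ p * aM (descFactorial ... ) = 0
      have hdesc : ((i₀ : ℕ).descFactorial (p - 1)) = (p - 1).factorial := by
        simp [hi₀, Nat.descFactorial_self]
      rw [hdesc] at h1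
      have hXz : ((i₀ : ℕ) - (p - 1)) = 0 := by simp [hi₀]
      rw [hXz, pow_zero, mul_one, map_natCast] at h1
      have hfacR : (((p - 1).factorial : ℕ) : RatFunc k) ≠ 0 := by
        intro hz
        have hd := (CharP.cast_eq_zero_iff (RatFunc k) p _).mp hz
        rw [Nat.Prime.dvd_factorial hprime] at hd
        omega
      rcases mul_eq_zero.mp h1 with hcp | hz
      · exact pow_eq_zero_iff hp.ne' |>.mp hcp
      · exact absurd hz hfacR
    · intro b _ hb
      have hlt : (b : ℕ) < p - 1 := by
        have := b.isLt
        have hne : (b : ℕ) ≠ p - 1 := fun hEq => hb (Fin.ext (by simp [hi₀, hEq]))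
        omega
      rw [Nat.descFactorial_eq_zero_iff_lt.mpr hlt]
      simp
    · intro habs
      exact absurd (Finset.mem_univ i₀) habs
  · intro hc
    refine ⟨∑ i : Fin p, RatFunc.C (((i : ℕ) + 1 : k))⁻¹ * (c i ^ p * RatFunc.X ^ ((i : ℕ) + 1)), ?_⟩
    have hsum := iterate_sum (k := k) Finset.univ
      (fun i : Fin p => RatFunc.C (((i : ℕ) + 1 : k))⁻¹
        * (c i ^ p * RatFunc.X ^ ((i : ℕ) + 1))) 1
    simp only [Function.iterate_one] at hsum
    rw [hsum, hf]
    apply Finset.sum_congr rfl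
    intro i _
    show ratDeriv _ = _
    by_cases hi : (i : ℕ) = p - 1
    · have : i = i₀ := Fin.ext (by simp [hi₀, hi])
      rw [this, hc, zero_pow hp.ne', zero_mul, mul_zero, ratDeriv_zero, zero_mul]
    · have hlt : (i : ℕ) + 1 < p := by have := i.isLt; omega
      have hXpow : (RatFunc.X ^ ((i : ℕ) + 1) : RatFunc k)
          = algebraMap (Polynomial k) (RatFunc k) (X ^ ((i : ℕ) + 1)) := by
        rw [map_pow, RatFunc.algebraMap_X]
      have hder : ratDeriv (RatFunc.X ^ ((i : ℕ) + 1) : RatFunc k)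
          = RatFunc.C (((i : ℕ) + 1 : k)) * RatFunc.X ^ (i : ℕ) := by
        rw [hXpow, ratDeriv_algebraMap, derivative_X_pow, map_mul, map_pow,
          RatFunc.algebraMap_X, RatFunc.algebraMap_C, Nat.add_sub_cancel]
        push_cast
        ring
      have hC : RatFunc.C (((i : ℕ) + 1 : k))⁻¹ * RatFunc.C (((i : ℕ) + 1 : k)) = 1 := by
        rw [← map_mul]
        have hne : (((i : ℕ) + 1 : k)) ≠ 0 := by
          have : ¬ (p ∣ (i : ℕ) + 1) := Nat.not_dvd_of_pos_of_lt (Nat.succ_pos _) hlt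
          intro hz
          apply this
          apply (CharP.cast_eq_zero_iff k p _).mp
          push_cast
          exact hz
        rw [inv_mul_cancel₀ hne, map_one]
      calc ratDeriv (RatFunc.C (((i : ℕ) + 1 : k))⁻¹ * (c i ^ p * RatFunc.X ^ ((i : ℕ) + 1)))
          = RatFunc.C (((i : ℕ) + 1 : k))⁻¹ * ratDeriv (c i ^ p * RatFunc.X ^ ((i : ℕ) + 1)) := by
            rw [ratDeriv_mul, ratDeriv_C, zero_mul, zero_add]
        _ = RatFunc.C (((i : ℕ) + 1 : k))⁻¹ * (c i ^ p * (RatFunc.C (((i : ℕ) + 1 : k)) * RatFunc.X ^ (i : ℕ))) := by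
            rw [ratDeriv_ppow_mul p hp, hder]
        _ = c i ^ p * RatFunc.X ^ (i : ℕ) := by
            rw [← mul_assoc, mul_comm (RatFunc.C (((i : ℕ) + 1 : k))⁻¹) (c i ^ p), mul_assoc,
              ← mul_assoc (RatFunc.C (((i : ℕ) + 1 : k))⁻¹), hC, one_mul]
end

section
/- Let k be a perfect field of characteristic p > 0, let a \in k, let m be a natural number, and let f \in k(X) have Cartier decomposition f = \sum_{i=0}^{p-1} f_i^p X^i. If (X - a)^m \cdot f has no pole at a, i.e. it can be written as a quotient u/v of polynomials u, v \in k[X] with v(a) \neq 0, then (X - a)^{\lceil m/p \rceil} \cdot f_{p-1} also has no pole at a, i.e. it can be written as a quotient of polynomials whose denominator does not vanish at a. -/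
open Polynomial Finset

section Aux
variable {k : Type*} [Field k]

lemma noPole_of_dvd (a : k) (n D : Polynomial k) (hD : D ≠ 0)
    (h : (X - C a) ^ (rootMultiplicity a D) ∣ n) :
    ∃ u v : Polynomial k, Polynomial.eval a v ≠ 0 ∧
      algebraMap (Polynomial k) (RatFunc k) n / algebraMap (Polynomial k) (RatFunc k) D =
        algebraMap (Polynomial k) (RatFunc k) u / algebraMap (Polynomial k) (RatFunc k) v := by
  obtain ⟨u, hu⟩ := h
  have hev : Polynomial.eval a (D /ₘ ((X - C a) ^ rootMultiplicity a D)) ≠ 0 :=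
    eval_divByMonic_pow_rootMultiplicity_ne_zero a hD
  have hD' : (X - C a) ^ rootMultiplicity a D * (D /ₘ ((X - C a) ^ rootMultiplicity a D)) = D :=
    pow_mul_divByMonic_rootMultiplicity_eq D a
  set Q := D /ₘ ((X - C a) ^ rootMultiplicity a D) with hQ
  clear_value Q
  set r := rootMultiplicity a D with hrr
  clear_value r
  refine ⟨u, Q, hev, ?_⟩
  have hy : algebraMap (Polynomial k) (RatFunc k) ((X - C a) ^ r) ≠ 0 :=
    RatFunc.algebraMap_ne_zero (pow_ne_zero _ (X_sub_C_ne_zero a))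
  rw [hu, ← hD', map_mul, map_mul, mul_div_mul_left _ _ hy]

lemma rootMultiplicity_pow' (a : k) (q : Polynomial k) (hq : q ≠ 0) (m : ℕ) :
    rootMultiplicity a (q ^ m) = m * rootMultiplicity a q := by
  induction m with
  | zero => simp
  | succ t ih =>
    rw [pow_succ, rootMultiplicity_mul (mul_ne_zero (pow_ne_zero t hq) hq), ih]
    ring

lemma key_dvd {p : ℕ} (hp : p.Prime) (a : k) (r : ℕ) (n : Fin p → Polynomial k)
    (h : (X - C a) ^ (p * r) ∣ ∑ j : Fin p, n j ^ p * (X - C a) ^ (j : ℕ)) :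
    ∀ j, (X - C a) ^ r ∣ n j := by
  classical
  set S := ∑ j : Fin p, n j ^ p * (X - C a) ^ (j : ℕ) with hS
  set J : Finset (Fin p) := Finset.univ.filter (fun j => n j ≠ 0) with hJ
  rcases J.eq_empty_or_nonempty with hJe | hJne
  · intro j
    have : n j = 0 := by
      by_contra hnj
      have : j ∈ J := by simp [hJ, hnj]
      simp [hJe] at this
    simp [this]
  obtain ⟨j0, hj0J, hmin⟩ := J.exists_min_image
    (fun j => p * rootMultiplicity a (n j) + (j : ℕ)) hJne
  have hnj0 : n j0 ≠ 0 := by simpa [hJ] using hj0J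
  set N := p * rootMultiplicity a (n j0) + (j0 : ℕ) with hN
  -- each other term is divisible by (X - C a)^(N+1)
  have hterm : ∀ j ∈ Finset.univ.erase j0,
      (X - C a) ^ (N + 1) ∣ n j ^ p * (X - C a) ^ (j : ℕ) := by
    intro j hj
    have hne : j ≠ j0 := (Finset.mem_erase.mp hj).1
    by_cases hnj : n j = 0
    · simp [hnj, dvd_zero, zero_pow hp.ne_zero]
    have hjJ : j ∈ J := by simp [hJ, hnj]
    have hle : N ≤ p * rootMultiplicity a (n j) + (j : ℕ) := hmin j hjJ
    have hneq : N ≠ p * rootMultiplicity a (n j) + (j : ℕ) := by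
      intro heq
      apply hne
      have h1 : ((j : ℕ) : ℕ) < p := j.2
      have h2 : ((j0 : ℕ) : ℕ) < p := j0.2
      have := congrArg (· % p) heq
      simp only [hN, Nat.mul_add_mod] at this
      rw [Nat.mod_eq_of_lt h2, Nat.mod_eq_of_lt h1] at this
      exact Fin.ext this.symm
    have hlt : N + 1 ≤ p * rootMultiplicity a (n j) + (j : ℕ) := lt_of_le_of_ne hle hneq
    calc (X - C a) ^ (N + 1) ∣ (X - C a) ^ (p * rootMultiplicity a (n j) + (j : ℕ)) :=
          pow_dvd_pow _ hlt
      _ ∣ n j ^ p * (X - C a) ^ (j : ℕ) := by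
          rw [pow_add]
          exact mul_dvd_mul (by
            rw [mul_comm, pow_mul]
            exact pow_dvd_pow_of_dvd (pow_rootMultiplicity_dvd (n j) a) p) dvd_rfl
  -- (X - C a)^(N+1) does not divide S
  have hnotdvd : ¬ (X - C a) ^ (N + 1) ∣ S := by
    intro hd
    have hsum : (X - C a) ^ (N + 1) ∣ ∑ j ∈ Finset.univ.erase j0, n j ^ p * (X - C a) ^ (j : ℕ) :=
      Finset.dvd_sum hterm
    have hj0term : (X - C a) ^ (N + 1) ∣ n j0 ^ p * (X - C a) ^ (j0 : ℕ) := by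
      have : n j0 ^ p * (X - C a) ^ (j0 : ℕ) =
          S - ∑ j ∈ Finset.univ.erase j0, n j ^ p * (X - C a) ^ (j : ℕ) := by
        rw [hS, ← Finset.add_sum_erase _ _ (Finset.mem_univ j0)]
        ring
      rw [this]
      exact dvd_sub hd hsum
    -- cancel (X - C a)^(j0)
    have hcancel : (X - C a) ^ (p * rootMultiplicity a (n j0) + 1) ∣ n j0 ^ p := by
      have h1 : (X - C a) ^ (N + 1) = (X - C a) ^ (p * rootMultiplicity a (n j0) + 1)
          * (X - C a) ^ (j0 : ℕ) := by rw [← pow_add, hN]; ring_nf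
      rw [h1] at hj0term
      exact (mul_dvd_mul_iff_right (pow_ne_zero _ (X_sub_C_ne_zero a))).mp hj0term
    -- but rootMultiplicity of n j0 ^ p is p * rootMultiplicity a (n j0)
    have hroot : rootMultiplicity a (n j0 ^ p) = p * rootMultiplicity a (n j0) :=
      rootMultiplicity_pow' a (n j0) hnj0 p
    have hnp : n j0 ^ p ≠ 0 := pow_ne_zero _ hnj0
    have := (le_rootMultiplicity_iff hnp).mpr hcancel
    omega
  have hSne : S ≠ 0 := by
    intro h0
    exact hnotdvd (h0 ▸ dvd_zero _)
  have h1 : p * r ≤ rootMultiplicity a S := (le_rootMultiplicity_iff hSne).mpr h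
  have h2 : rootMultiplicity a S ≤ N := by
    have := (rootMultiplicity_le_iff hSne a N).mpr
    exact this hnotdvd
  intro j
  by_cases hnj : n j = 0
  · simp [hnj]
  have hjJ : j ∈ J := by simp [hJ, hnj]
  have h3 : N ≤ p * rootMultiplicity a (n j) + (j : ℕ) := hmin j hjJ
  have h4 : r ≤ rootMultiplicity a (n j) := by
    have hjp : (j : ℕ) < p := j.2
    nlinarith [h1, h2, h3]
  exact dvd_trans (pow_dvd_pow _ h4) (pow_rootMultiplicity_dvd (n j) a)

lemma main_lemma {p : ℕ} (hp : p.Prime) (a : k) (e : Fin p → RatFunc k)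
    (hreg : ∃ u v : Polynomial k, Polynomial.eval a v ≠ 0 ∧
      ∑ j : Fin p, e j ^ p * (RatFunc.X - RatFunc.C a) ^ (j : ℕ) =
        algebraMap (Polynomial k) (RatFunc k) u / algebraMap (Polynomial k) (RatFunc k) v)
    (j : Fin p) :
    ∃ u v : Polynomial k, Polynomial.eval a v ≠ 0 ∧
      e j = algebraMap (Polynomial k) (RatFunc k) u / algebraMap (Polynomial k) (RatFunc k) v := by
  classical
  obtain ⟨u, v, hv, heq⟩ := hreg
  set φ := algebraMap (Polynomial k) (RatFunc k) with hφ
  set D : Polynomial k := ∏ j' : Fin p, (e j').denom with hD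
  set n : Fin p → Polynomial k :=
    fun j => (e j).num * ∏ j' ∈ Finset.univ.erase j, (e j').denom with hn
  have hDne : D ≠ 0 := Finset.prod_ne_zero_iff.mpr fun j' _ => RatFunc.denom_ne_zero _
  -- e j = n j / D
  have he : ∀ j, e j = φ (n j) / φ D := by
    intro j
    have hsplit : D = (e j).denom * ∏ j' ∈ Finset.univ.erase j, (e j').denom :=
      (Finset.mul_prod_erase _ _ (Finset.mem_univ j)).symm
    have hPne : φ (∏ j' ∈ Finset.univ.erase j, (e j').denom) ≠ 0 :=
      RatFunc.algebraMap_ne_zero (Finset.prod_ne_zero_iff.mpr fun j' _ => RatFunc.denom_ne_zero _)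
    rw [hsplit, hn, map_mul, map_mul]
    rw [mul_div_mul_right _ _ hPne, RatFunc.num_div_denom]
  -- rewrite the sum with common denominator
  set S : Polynomial k := ∑ j : Fin p, n j ^ p * (X - C a) ^ (j : ℕ) with hSdef
  have hy : RatFunc.X - RatFunc.C a = φ (X - C a) := by
    rw [map_sub, RatFunc.algebraMap_X, RatFunc.algebraMap_C]
  have hsum : ∑ j : Fin p, e j ^ p * (RatFunc.X - RatFunc.C a) ^ (j : ℕ) = φ S / φ (D ^ p) := by
    rw [hSdef, map_sum, Finset.sum_div]
    refine Finset.sum_congr rfl fun j' _ => ?_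
    rw [he j', hy, div_pow, ← map_pow, ← map_pow, div_mul_eq_mul_div, ← map_pow, ← map_mul]
  rw [hsum] at heq
  have hvne : v ≠ 0 := fun h0 => hv (by simp [h0])
  have hφv : φ v ≠ 0 := RatFunc.algebraMap_ne_zero hvne
  have hφDp : φ (D ^ p) ≠ 0 := RatFunc.algebraMap_ne_zero (pow_ne_zero _ hDne)
  have hcross : S * v = u * D ^ p := by
    apply RatFunc.algebraMap_injective k
    rw [map_mul, map_mul]
    rw [div_eq_div_iff hφDp hφv] at heq
    exact heq
  -- (X - C a)^(p * rootMultiplicity a D) divides S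
  have hdvdSv : (X - C a) ^ (p * rootMultiplicity a D) ∣ S * v := by
    rw [hcross]
    refine Dvd.dvd.mul_left ?_ u
    rw [mul_comm, pow_mul]
    exact pow_dvd_pow_of_dvd (pow_rootMultiplicity_dvd D a) p
  have hcop : IsCoprime ((X - C a) ^ (p * rootMultiplicity a D)) v := by
    refine IsCoprime.pow_left ?_
    rw [(irreducible_X_sub_C a).coprime_iff_not_dvd, dvd_iff_isRoot]
    exact hv
  have hdvdS : (X - C a) ^ (p * rootMultiplicity a D) ∣ S := hcop.dvd_of_dvd_mul_right hdvdSv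
  have hkey := key_dvd hp a (rootMultiplicity a D) n hdvdS j
  rw [he j]
  exact noPole_of_dvd a (n j) D hDne hkey

lemma cartier_translate {p : ℕ} [CharP k p] (hp : p.Prime) [PerfectField k] (a : k) (c : Fin p → RatFunc k) :
    ∃ d : Fin p → RatFunc k,
      d ⟨p - 1, Nat.sub_lt hp.pos one_pos⟩ = c ⟨p - 1, Nat.sub_lt hp.pos one_pos⟩ ∧
      ∑ i : Fin p, c i ^ p * RatFunc.X ^ (i : ℕ) =
        ∑ j : Fin p, d j ^ p * (RatFunc.X - RatFunc.C a) ^ (j : ℕ) := by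
  haveI : Fact p.Prime := ⟨hp⟩
  haveI : ExpChar k p := ExpChar.prime hp
  haveI : CharP (RatFunc k) p := charP_of_injective_algebraMap' (A := RatFunc k) k p
  haveI : ExpChar (RatFunc k) p := ExpChar.prime hp
  obtain ⟨b, hb⟩ := surjective_frobenius k p a
  have hbp : b ^ p = a := by rw [← hb, frobenius_def]
  have hnat : ∀ n : ℕ, ((n : k)) ^ p = (n : k) := fun n => by
    rw [← frobenius_def]; exact map_natCast (frobenius k p) n
  refine ⟨fun j => ∑ i : Fin p,
      RatFunc.C (((i : ℕ).choose (j : ℕ) : k) * b ^ ((i : ℕ) - (j : ℕ))) * c i, ?_, ?_⟩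
  · show (∑ i : Fin p, RatFunc.C (((i : ℕ).choose (p - 1) : k) * b ^ ((i : ℕ) - (p - 1))) * c i)
        = c ⟨p - 1, Nat.sub_lt hp.pos one_pos⟩
    rw [Finset.sum_eq_single_of_mem (⟨p - 1, Nat.sub_lt hp.pos one_pos⟩ : Fin p)
      (Finset.mem_univ _)]
    · simp
    · intro i _ hi
      have hlt : (i : ℕ) < p - 1 := by
        have h1 : (i : ℕ) < p := i.2
        have h2 : (i : ℕ) ≠ p - 1 := fun h => hi (Fin.ext h)
        omega
      simp [Nat.choose_eq_zero_of_lt hlt]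
  · have hd : ∀ j : Fin p,
        (∑ i : Fin p, RatFunc.C (((i : ℕ).choose (j : ℕ) : k) * b ^ ((i : ℕ) - (j : ℕ))) * c i) ^ p
          = ∑ i : Fin p,
            RatFunc.C (((i : ℕ).choose (j : ℕ) : k) * a ^ ((i : ℕ) - (j : ℕ))) * c i ^ p := by
      intro j
      rw [sum_pow_char]
      refine Finset.sum_congr rfl fun i _ => ?_
      rw [mul_pow, ← map_pow, mul_pow, hnat, ← pow_right_comm, hbp]
    calc ∑ i : Fin p, c i ^ p * RatFunc.X ^ (i : ℕ)
        = ∑ i : Fin p, ∑ j : Fin p,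
            RatFunc.C (((i : ℕ).choose (j : ℕ) : k) * a ^ ((i : ℕ) - (j : ℕ))) * c i ^ p
              * (RatFunc.X - RatFunc.C a) ^ (j : ℕ) := by
          refine Finset.sum_congr rfl fun i _ => ?_
          conv_lhs => rw [show RatFunc.X =
            (RatFunc.X - RatFunc.C a) + RatFunc.C a from by ring]
          rw [add_pow, Finset.mul_sum,
            Fin.sum_univ_eq_sum_range (fun j =>
              RatFunc.C (((i : ℕ).choose j : k) * a ^ ((i : ℕ) - j)) * c i ^ p
                * (RatFunc.X - RatFunc.C a) ^ j) p,
            Finset.sum_subset (Finset.range_subset_range.mpr i.2)]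
          · refine Finset.sum_congr rfl fun j _ => ?_
            rw [map_mul, map_pow, map_natCast RatFunc.C]
            ring
          · intro j _ hj
            have hlt : (i : ℕ) < j := by
              simp only [Finset.mem_range, not_lt] at hj
              omega
            simp [Nat.choose_eq_zero_of_lt hlt]
      _ = ∑ j : Fin p, (∑ i : Fin p,
            RatFunc.C (((i : ℕ).choose (j : ℕ) : k) * a ^ ((i : ℕ) - (j : ℕ))) * c i ^ p)
              * (RatFunc.X - RatFunc.C a) ^ (j : ℕ) := by
          rw [Finset.sum_comm]
          exact Finset.sum_congr rfl fun j _ => (Finset.sum_mul _ _ _).symm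
      _ = _ := Finset.sum_congr rfl fun j _ => by rw [hd j]

end Aux

/-- Over a perfect field of characteristic `p > 0`, let `f` have Cartier
decomposition `f = ∑ f_i^p X^i`. If `(X - a)^m * f` has no pole at `a` (it can be written
as `u/v` with `v(a) ≠ 0`), then `(X - a)^⌈m/p⌉ * f_{p-1}` has no pole at `a` either. -/
theorem cartier_top_no_pole
    {k : Type*} [Field k] (p : ℕ) [CharP k p] (hp : 0 < p) [PerfectField k]
    (a : k) (m : ℕ) (f : RatFunc k) (c : Fin p → RatFunc k)
    (hf : f = ∑ i : Fin p, (c i) ^ p * RatFunc.X ^ (i : ℕ))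
    (hreg : ∃ u v : Polynomial k, Polynomial.eval a v ≠ 0 ∧
      (RatFunc.X - RatFunc.C a) ^ m * f =
        algebraMap (Polynomial k) (RatFunc k) u / algebraMap (Polynomial k) (RatFunc k) v) :
    ∃ u v : Polynomial k, Polynomial.eval a v ≠ 0 ∧
      (RatFunc.X - RatFunc.C a) ^ ((m + p - 1) / p) * c ⟨p - 1, Nat.sub_lt hp one_pos⟩ =
        algebraMap (Polynomial k) (RatFunc k) u / algebraMap (Polynomial k) (RatFunc k) v := by
  haveI : NeZero p := ⟨hp.ne'⟩
  have hprime : p.Prime := (CharP.char_is_prime_of_pos k p).out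
  set q := (m + p - 1) / p with hq
  have hm : m ≤ p * q := by
    have h1 : p * q + (m + p - 1) % p = m + p - 1 := by rw [hq]; exact Nat.div_add_mod _ _
    have h2 : (m + p - 1) % p < p := Nat.mod_lt _ hp
    omega
  obtain ⟨d, hd, hfd⟩ := cartier_translate hprime a c
  rw [hfd] at hf
  -- no pole for (X - C a)^(p*q) * f
  obtain ⟨u, v, hv, heq⟩ := hreg
  set φ := algebraMap (Polynomial k) (RatFunc k) with hφ
  have hy : RatFunc.X - RatFunc.C a = φ (X - Polynomial.C a) := by
    rw [map_sub, RatFunc.algebraMap_X, RatFunc.algebraMap_C]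
  have heq2 : (RatFunc.X - RatFunc.C a) ^ (p * q) * f =
      φ ((X - Polynomial.C a) ^ (p * q - m) * u) / φ v := by
    have hstep : (RatFunc.X - RatFunc.C a) ^ (p * q) * f =
        (RatFunc.X - RatFunc.C a) ^ (p * q - m) * ((RatFunc.X - RatFunc.C a) ^ m * f) := by
      rw [← mul_assoc, ← pow_add, Nat.sub_add_cancel hm]
    rw [hstep, heq, hy, ← map_pow, ← mul_div_assoc, ← map_mul]
  -- apply the main lemma to e j = (X - C a)^q * d j
  have hsum : ∑ j : Fin p, ((RatFunc.X - RatFunc.C a) ^ q * d j) ^ p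
      * (RatFunc.X - RatFunc.C a) ^ (j : ℕ) = (RatFunc.X - RatFunc.C a) ^ (p * q) * f := by
    rw [hf, Finset.mul_sum]
    refine Finset.sum_congr rfl fun j _ => ?_
    rw [mul_pow, ← pow_mul, mul_comm q p]
    ring
  have := main_lemma hprime a (fun j => (RatFunc.X - RatFunc.C a) ^ q * d j)
    ⟨(X - Polynomial.C a) ^ (p * q - m) * u, v, hv, by rw [hsum, heq2]⟩
    ⟨p - 1, Nat.sub_lt hp one_pos⟩
  simpa [hd] using this
end

section
/- Let k be an algebraically closed field of characteristic p > 0, let a_1, \dots, a_n be pairwise distinct elements of k, let m_1, \dots, m_n be integers, and let f \in k(X) have Cartier decomposition f = \sum_{i=0}^{p-1} f_i^p X^i. If f \cdot \prod_{i=1}^n (X - a_i)^{m_i} is a polynomial r \in k[X] that is either zero or of degree at most (\sum_{i=1}^n m_i) - 2, then f_{p-1} \cdot \prod_{i=1}^n (X - a_i)^{\lceil m_i/p \rceil} is a polynomial that is either zero or of degree at most (\sum_{i=1}^n \lceil m_i/p \rceil) - 2. -/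
open Polynomial

section Helpers
variable {k : Type*} [Field k] (p : ℕ) [Fact p.Prime] [CharP k p]

lemma coeff_pow_char' (f : k[X]) (n : ℕ) :
    (f ^ p).coeff n = if p ∣ n then (f.coeff (n / p)) ^ p else 0 := by
  rw [← Polynomial.map_frobenius_expand p f, Polynomial.coeff_map,
    Polynomial.coeff_expand (Fact.out : p.Prime).pos]
  rw [apply_ite (frobenius k p)]
  simp [frobenius_def, zero_pow (Fact.out : p.Prime).ne_zero]

lemma coeff_sum_pow (w : Fin p → k[X]) (N : ℕ) :
    (∑ j : Fin p, (w j) ^ p * Polynomial.X ^ (j : ℕ)).coeff N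
      = ((w ⟨N % p, Nat.mod_lt N (Fact.out : p.Prime).pos⟩).coeff (N / p)) ^ p := by
  have hp0 := (Fact.out : p.Prime).pos
  rw [Polynomial.finset_sum_coeff]
  rw [Finset.sum_eq_single (⟨N % p, Nat.mod_lt N hp0⟩ : Fin p)]
  · rw [Polynomial.coeff_mul_X_pow', if_pos (Nat.mod_le N p)]
    rw [coeff_pow_char']
    have h1 : N - N % p = p * (N / p) := by
      have := Nat.div_add_mod N p; omega
    rw [if_pos ⟨N / p, h1⟩, h1, Nat.mul_div_cancel_left _ hp0]
  · intro j _ hj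
    rw [Polynomial.coeff_mul_X_pow']
    split_ifs with hle
    · rw [coeff_pow_char', if_neg]
      rintro ⟨t, ht⟩
      apply hj
      have hjp : (j : ℕ) < p := j.isLt
      have : N % p = (j : ℕ) := by
        have := Nat.div_add_mod N p
        have : N = p * t + (j : ℕ) := by omega
        rw [this, Nat.mul_add_mod, Nat.mod_eq_of_lt hjp]
      exact Fin.ext this.symm
    · rfl
  · intro h; exact absurd (Finset.mem_univ _) h


variable [PerfectRing k p]

noncomputable def pSlice (R : k[X]) (j : ℕ) : k[X] :=
  ∑ t ∈ Finset.range (R.natDegree + 1),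
    Polynomial.C ((frobeniusEquiv k p).symm (R.coeff (p * t + j))) * Polynomial.X ^ t

lemma pSlice_coeff (R : k[X]) (j t : ℕ) :
    (pSlice p R j).coeff t = (frobeniusEquiv k p).symm (R.coeff (p * t + j)) := by
  have hp0 := (Fact.out : p.Prime).pos
  rw [pSlice, Polynomial.finset_sum_coeff]
  simp only [Polynomial.coeff_C_mul, Polynomial.coeff_X_pow, mul_ite, mul_one, mul_zero]
  rw [Finset.sum_ite_eq (Finset.range (R.natDegree + 1)) t]
  split_ifs with h
  · rfl
  · rw [Finset.mem_range, not_lt] at h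
    rw [Polynomial.coeff_eq_zero_of_natDegree_lt, map_zero]
    have : t ≤ p * t + j := le_trans (Nat.le_mul_of_pos_left t hp0) (Nat.le_add_right _ _)
    omega

lemma pSlice_sum (R : k[X]) :
    ∑ j : Fin p, (pSlice p R j) ^ p * Polynomial.X ^ (j : ℕ) = R := by
  ext N
  rw [coeff_sum_pow, pSlice_coeff]
  rw [← frobenius_def, frobenius_apply_frobeniusEquiv_symm]
  congr 1
  show p * (N / p) + N % p = N
  have := Nat.div_add_mod N p
  omega

lemma poly_unique (w : Fin p → k[X]) (h : ∑ j : Fin p, (w j) ^ p * Polynomial.X ^ (j : ℕ) = 0)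
    (j : Fin p) : w j = 0 := by
  have hp0 := (Fact.out : p.Prime).pos
  ext t
  have hc := coeff_sum_pow p w (p * t + (j : ℕ))
  rw [h, Polynomial.coeff_zero] at hc
  have h1 : (p * t + (j : ℕ)) % p = (j : ℕ) := by
    rw [Nat.mul_add_mod, Nat.mod_eq_of_lt j.isLt]
  have h2 : (p * t + (j : ℕ)) / p = t := by
    rw [Nat.mul_add_div hp0, Nat.div_eq_of_lt j.isLt]
    omega
  have hj : (⟨(p * t + (j : ℕ)) % p, Nat.mod_lt _ hp0⟩ : Fin p) = j := Fin.ext h1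
  rw [hj, h2] at hc
  simpa [pow_eq_zero_iff (Fact.out : p.Prime).ne_zero] using hc.symm

lemma ratfunc_unique (u : Fin p → RatFunc k)
    (h : ∑ j : Fin p, (u j) ^ p * RatFunc.X ^ (j : ℕ) = 0) (j : Fin p) : u j = 0 := by
  set A := algebraMap k[X] (RatFunc k)
  set d : k[X] := ∏ i : Fin p, (u i).denom with hd
  have hdne : ∀ i : Fin p, A ((u i).denom) ≠ 0 := fun i =>
    RatFunc.algebraMap_ne_zero (RatFunc.denom_ne_zero (u i))
  have hdn : A d ≠ 0 := by
    rw [hd, map_prod]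
    exact Finset.prod_ne_zero_iff.mpr fun i _ => hdne i
  set w : Fin p → k[X] := fun i => (u i).num * ∏ l ∈ Finset.univ.erase i, (u l).denom with hw
  have hwu : ∀ i : Fin p, u i * A d = A (w i) := by
    intro i
    have h1 : (u i).denom * ∏ l ∈ Finset.univ.erase i, (u l).denom = d := by
      rw [hd]; exact Finset.mul_prod_erase Finset.univ (fun l => (u l).denom) (Finset.mem_univ i)
    have h2 : u i * A ((u i).denom) = A ((u i).num) := by
      have h0 := RatFunc.num_div_denom (u i)
      rw [div_eq_iff (hdne i)] at h0
      exact h0.symm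
    rw [hw, ← h1, map_mul, ← mul_assoc, h2, ← map_mul]
  have key : A (∑ i : Fin p, (w i) ^ p * Polynomial.X ^ (i : ℕ)) = 0 := by
    rw [map_sum]
    simp only [map_mul, map_pow, RatFunc.algebraMap_X]
    calc ∑ i : Fin p, (A (w i)) ^ p * RatFunc.X ^ (i : ℕ)
        = (∑ i : Fin p, (u i) ^ p * RatFunc.X ^ (i : ℕ)) * (A d) ^ p := by
          rw [Finset.sum_mul]
          refine Finset.sum_congr rfl fun i _ => ?_
          rw [← hwu i, mul_pow]; ring
      _ = 0 := by rw [h, zero_mul]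
  have : ∑ i : Fin p, (w i) ^ p * Polynomial.X ^ (i : ℕ) = 0 :=
    RatFunc.algebraMap_injective k (by simpa [A, RatFunc.algebraMap_X] using key)
  have hwj := poly_unique p w this j
  have := hwu j
  rw [hwj, map_zero] at this
  exact (mul_eq_zero.mp this).resolve_right hdn

end Helpers

/-- Over an algebraically closed field of characteristic `p > 0`, let
`a_1, …, a_n` be pairwise distinct, `m_1, …, m_n ∈ ℤ`, and let `f` have Cartier
decomposition `f = ∑ f_i^p X^i`. If `f * ∏ (X - a_i)^{m_i}` is a polynomial that is zero
or of degree at most `(∑ m_i) - 2`, then `f_{p-1} * ∏ (X - a_i)^{⌈m_i/p⌉}` is a polynomial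
that is zero or of degree at most `(∑ ⌈m_i/p⌉) - 2`. -/
theorem cartier_top_global_section
    {k : Type*} [Field k] [IsAlgClosed k] (p : ℕ) [CharP k p] (hp : 0 < p)
    (n : ℕ) (a : Fin n → k) (ha : Function.Injective a) (m : Fin n → ℤ)
    (f : RatFunc k) (c : Fin p → RatFunc k)
    (hf : f = ∑ i : Fin p, (c i) ^ p * RatFunc.X ^ (i : ℕ))
    (r : Polynomial k)
    (hr : f * ∏ i : Fin n, (RatFunc.X - RatFunc.C (a i)) ^ (m i)
        = algebraMap (Polynomial k) (RatFunc k) r)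
    (hdeg : r = 0 ∨ (r.natDegree : ℤ) ≤ (∑ i : Fin n, m i) - 2) :
    ∃ s : Polynomial k,
      c ⟨p - 1, Nat.sub_lt hp one_pos⟩ *
          ∏ i : Fin n, (RatFunc.X - RatFunc.C (a i)) ^ (⌈(m i : ℚ) / (p : ℚ)⌉)
        = algebraMap (Polynomial k) (RatFunc k) s ∧
      (s = 0 ∨ (s.natDegree : ℤ) ≤ (∑ i : Fin n, ⌈(m i : ℚ) / (p : ℚ)⌉) - 2) := by
  haveI : NeZero p := ⟨hp.ne'⟩
  haveI : Fact p.Prime := CharP.char_is_prime_of_pos k p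
  haveI : CharP (RatFunc k) p := charP_of_injective_algebraMap (algebraMap k (RatFunc k)).injective p
  set A := algebraMap (Polynomial k) (RatFunc k) with hA
  have hpQ : (0 : ℚ) < (p : ℚ) := by exact_mod_cast hp
  set ν : Fin n → ℤ := fun i => ⌈(m i : ℚ) / (p : ℚ)⌉ with hν
  have hple : ∀ i, m i ≤ p * ν i ∧ p * ν i ≤ m i + (p - 1) := by
    intro i
    constructor
    · have h1 := Int.le_ceil ((m i : ℚ) / (p : ℚ))
      rw [div_le_iff₀ hpQ] at h1
      have : (m i : ℚ) ≤ (p : ℚ) * (ν i : ℚ) := by rw [hν]; push_cast; linarith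
      exact_mod_cast this
    · have h1 := Int.ceil_lt_add_one ((m i : ℚ) / (p : ℚ))
      have h2 : ((ν i : ℚ)) < (m i : ℚ) / (p : ℚ) + 1 := by rw [hν]; push_cast; exact h1
      rw [div_add' _ _ _ hpQ.ne', lt_div_iff₀ hpQ] at h2
      have h3 : (p : ℚ) * (ν i : ℚ) < (m i : ℚ) + (p : ℚ) := by linarith
      have h4 : (p : ℤ) * ν i < m i + p := by exact_mod_cast h3
      omega
  set e : Fin n → ℕ := fun i => (p * ν i - m i).toNat with he
  have hecast : ∀ i, ((e i : ℤ)) = p * ν i - m i := fun i =>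
    Int.toNat_of_nonneg (by linarith [(hple i).1])
  set B : Fin n → RatFunc k := fun i => RatFunc.X - RatFunc.C (a i) with hB
  have hBA : ∀ i, A (Polynomial.X - Polynomial.C (a i)) = B i := by
    intro i; rw [map_sub, RatFunc.algebraMap_X, RatFunc.algebraMap_C, hB]
  have hBne : ∀ i, B i ≠ 0 := by
    intro i
    rw [← hBA i]
    exact RatFunc.algebraMap_ne_zero (Polynomial.X_sub_C_ne_zero (a i))
  set Q : RatFunc k := ∏ i, B i ^ (ν i) with hQ
  have hQne : Q ≠ 0 :=
    Finset.prod_ne_zero_iff.mpr fun i _ => zpow_ne_zero _ (hBne i)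
  set R : Polynomial k := r * ∏ i, (Polynomial.X - Polynomial.C (a i)) ^ (e i) with hR
  have hAR : A R = f * Q ^ p := by
    have h1 : A R = A r * ∏ i, B i ^ ((e i : ℤ)) := by
      rw [hR, map_mul, map_prod]
      congr 1
      refine Finset.prod_congr rfl fun i _ => ?_
      rw [map_pow, hBA i, zpow_natCast]
    rw [h1, ← hr, hQ, mul_assoc]
    congr 1
    rw [← Finset.prod_mul_distrib, ← Finset.prod_pow]
    refine Finset.prod_congr rfl fun i _ => ?_
    rw [← zpow_natCast (B i ^ ν i) p, ← zpow_mul, ← zpow_add₀ (hBne i)]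
    congr 1
    rw [mul_comm]
    linarith [hecast i]
  set S : Fin p → Polynomial k := fun j => pSlice p R (j : ℕ) with hS
  have hRdec : ∑ j : Fin p, (S j) ^ p * Polynomial.X ^ (j : ℕ) = R := pSlice_sum p R
  have hfd : f = ∑ j : Fin p, (A (S j) * Q⁻¹) ^ p * RatFunc.X ^ (j : ℕ) := by
    have h1 : A R = ∑ j : Fin p, (A (S j)) ^ p * RatFunc.X ^ (j : ℕ) := by
      rw [← hRdec, map_sum]
      refine Finset.sum_congr rfl fun j _ => ?_
      rw [map_mul, map_pow, map_pow, RatFunc.algebraMap_X]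
    have h2 : f = A R * (Q⁻¹) ^ p := by
      rw [hAR, mul_assoc, ← mul_pow, mul_inv_cancel₀ hQne, one_pow, mul_one]
    rw [h2, h1, Finset.sum_mul]
    refine Finset.sum_congr rfl fun j _ => ?_
    rw [mul_pow]; ring
  have hzero : ∑ j : Fin p, (c j - A (S j) * Q⁻¹) ^ p * RatFunc.X ^ (j : ℕ) = 0 := by
    have hsub : ∀ j : Fin p, (c j - A (S j) * Q⁻¹) ^ p = (c j) ^ p - (A (S j) * Q⁻¹) ^ p :=
      fun j => sub_pow_char _ _
    simp only [hsub, sub_mul]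
    rw [Finset.sum_sub_distrib, ← hf, ← hfd, sub_self]
  have hkey : ∀ j, c j = A (S j) * Q⁻¹ := by
    intro j
    have := ratfunc_unique p _ hzero j
    exact sub_eq_zero.mp this
  set jtop : Fin p := ⟨p - 1, Nat.sub_lt hp one_pos⟩ with hjtop
  refine ⟨S jtop, ?_, ?_⟩
  · show c jtop * Q = A (S jtop)
    rw [hkey jtop, mul_assoc, inv_mul_cancel₀ hQne, mul_one]
  · by_cases hr0 : r = 0
    · left
      have hR0 : R = 0 := by rw [hR, hr0, zero_mul]
      rw [hS]
      ext t
      rw [pSlice_coeff, hR0]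
      simp
    · have hdeg' : (r.natDegree : ℤ) ≤ (∑ i : Fin n, m i) - 2 := hdeg.resolve_left hr0
      by_cases hs0 : S jtop = 0
      · left; exact hs0
      right
      have hprodne : (∏ i, (Polynomial.X - Polynomial.C (a i)) ^ (e i)) ≠ 0 :=
        Finset.prod_ne_zero_iff.mpr fun i _ => pow_ne_zero _ (Polynomial.X_sub_C_ne_zero (a i))
      have hRdeg : R.natDegree = r.natDegree + ∑ i, e i := by
        rw [hR, Polynomial.natDegree_mul hr0 hprodne, Polynomial.natDegree_prod _ _
          (fun i _ => pow_ne_zero _ (Polynomial.X_sub_C_ne_zero (a i)))]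
        congr 1
        refine Finset.sum_congr rfl fun i _ => ?_
        rw [Polynomial.natDegree_pow, Polynomial.natDegree_X_sub_C, mul_one]
      have hRbound : (R.natDegree : ℤ) ≤ p * (∑ i, ν i) - 2 := by
        have h1 : ((∑ i, e i : ℕ) : ℤ) = ∑ i, ((e i : ℤ)) := by push_cast; rfl
        have h2 : (∑ i, ((e i : ℤ))) = p * (∑ i, ν i) - ∑ i, m i := by
          rw [Finset.mul_sum, ← Finset.sum_sub_distrib]
          exact Finset.sum_congr rfl fun i _ => hecast i
        have := hdeg'
        rw [hRdeg]
        push_cast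
        rw [h2] at h1
        push_cast at h1
        omega
      set D := (S jtop).natDegree with hD
      have hcoeff : R.coeff (p * D + (p - 1)) ≠ 0 := by
        intro hzero'
        apply hs0
        apply Polynomial.leadingCoeff_eq_zero.mp
        rw [Polynomial.leadingCoeff, ← hD, hS]
        show (pSlice p R ((jtop : Fin p) : ℕ)).coeff D = 0
        rw [pSlice_coeff]
        have : ((jtop : Fin p) : ℕ) = p - 1 := rfl
        rw [this, hzero', map_zero]
      have hle : p * D + (p - 1) ≤ R.natDegree := Polynomial.le_natDegree_of_ne_zero hcoeff
      have hleZ : (p : ℤ) * D + (p - 1) ≤ (R.natDegree : ℤ) := by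
        have h1 : ((p * D + (p - 1) : ℕ) : ℤ) ≤ (R.natDegree : ℤ) := by exact_mod_cast hle
        push_cast at h1
        omega
      have hp1 : (1 : ℤ) ≤ (p : ℤ) := by exact_mod_cast hp
      have hfin : (D : ℤ) ≤ (∑ i, ν i) - 2 := by nlinarith [hRbound, hleZ]
      calc ((S jtop).natDegree : ℤ) = (D : ℤ) := rfl
        _ ≤ (∑ i, ν i) - 2 := hfin
        _ = (∑ i : Fin n, ⌈(m i : ℚ) / (p : ℚ)⌉) - 2 := by rw [hν]
end

section
/- Let k be an algebraically closed field of characteristic p > 0 and let w \in k(X) be a nonzero rational function. Then there exist f_0, \dots, f_{p-2} \in k(X) such that w'/w = \sum_{i=0}^{p-2} f_i^p \cdot X^i + (w'/w)^p \cdot X^{p-1}. Equivalently, in the Cartier decomposition of the logarithmic derivative w'/w, the top component f_{p-1} equals w'/w itself; i.e. the Cartier operator fixes logarithmic differentials: \mathfrak{c}(dw/w) = dw/w. -/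
/-!
Write `w = num / denom`, so that `w'/w = num'/num - denom'/denom`. Over an algebraically closed
field the logarithmic derivative of a polynomial is `∑ (X - r)⁻¹` over its roots, and the `g`
whose top Cartier component is `g` form an additive group (Frobenius is additive), so only
`(X - r)⁻¹` needs checking. Since `(X - r)^p = X^p - r^p`, we have
`(X - r)^(p-1) = ∑_{i<p} X^i r^(p-1-i)`, and dividing by `(X - r)^p` exhibits the
decomposition of `(X - r)⁻¹`, with top coefficient `((X - r)⁻¹)^p`.
-/

open Polynomial

theorem sub_pow_expChar_sub_one_eq_geom_sum {R : Type*} [CommRing R] [IsDomain R] {p : ℕ}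
    [ExpChar R p] {x a : R} (hxa : x - a ≠ 0) :
    (x - a) ^ (p - 1) = ∑ i ∈ Finset.range p, x ^ i * a ^ (p - 1 - i) := by
  refine mul_right_cancel₀ hxa ?_
  rw [geom_sum₂_mul, ← sub_pow_expChar, ← pow_succ, Nat.sub_add_cancel (expChar_pos R p)]

section CartierFixed

variable (K : Type*) [Field K] (p : ℕ) [ExpChar K p] (x : K)

/-- With respect to the decomposition `K = ⊕_{i<p} K^p x^i`, these are the `g` whose
top component is `g` itself, i.e. those with `𝔠(g dx) = g dx`. -/
def cartierFixed : AddSubgroup K where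
  carrier := {g | ∃ c : Fin (p - 1) → K,
    g = (∑ i : Fin (p - 1), c i ^ p * x ^ (i : ℕ)) + g ^ p * x ^ (p - 1)}
  zero_mem' := ⟨0, by simp [zero_pow (expChar_ne_zero K p)]⟩
  add_mem' := by
    rintro g h ⟨c, hc⟩ ⟨d, hd⟩
    refine ⟨c + d, ?_⟩
    simp only [Pi.add_apply, add_pow_expChar, add_mul, Finset.sum_add_distrib]
    linear_combination hc + hd
  neg_mem' := by
    rintro g ⟨c, hc⟩
    have neg_pow_expChar : ∀ y : K, (-y) ^ p = -y ^ p := map_neg (frobenius K p)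
    refine ⟨-c, ?_⟩
    simp only [Pi.neg_apply, neg_pow_expChar, neg_mul, Finset.sum_neg_distrib]
    linear_combination -hc

variable {K p x}

theorem mem_cartierFixed {g : K} : g ∈ cartierFixed K p x ↔ ∃ c : Fin (p - 1) → K,
    g = (∑ i : Fin (p - 1), c i ^ p * x ^ (i : ℕ)) + g ^ p * x ^ (p - 1) :=
  Iff.rfl

theorem inv_sub_mem_cartierFixed {a b : K} (hxa : x - a ≠ 0) (hb : b ^ p = a) :
    (x - a)⁻¹ ∈ cartierFixed K p x := by
  have hp : p = p - 1 + 1 := (Nat.sub_add_cancel (expChar_pos K p)).symm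
  refine ⟨fun i => b ^ (p - 1 - (i : ℕ)) / (x - a), ?_⟩
  have hsum : ∑ i : Fin (p - 1), (b ^ (p - 1 - (i : ℕ)) / (x - a)) ^ p * x ^ (i : ℕ) =
      (∑ i ∈ Finset.range (p - 1), x ^ i * a ^ (p - 1 - i)) / (x - a) ^ p := by
    rw [Fin.sum_univ_eq_sum_range (fun i => (b ^ (p - 1 - i) / (x - a)) ^ p * x ^ i),
      Finset.sum_div]
    refine Finset.sum_congr rfl fun i _ => ?_
    rw [div_pow, ← pow_mul, mul_comm (p - 1 - i), pow_mul, hb]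
    ring
  calc (x - a)⁻¹ = (x - a) ^ (p - 1) / (x - a) ^ p := by
        rw [hp, pow_succ, Nat.add_sub_cancel, div_mul_cancel_left₀ (pow_ne_zero _ hxa)]
    _ = _ := by
        rw [hsum, sub_pow_expChar_sub_one_eq_geom_sum hxa, hp, Finset.sum_range_succ,
          Nat.add_sub_cancel, Nat.sub_self, pow_zero, mul_one, inv_pow, ← hp]
        ring

end CartierFixed

namespace RatFunc

variable {k : Type*} [Field k]

theorem ratDeriv_div_self {w : RatFunc k} (hw : w ≠ 0) :
    ratDeriv w / w =
      algebraMap k[X] (RatFunc k) (derivative w.num) / algebraMap k[X] (RatFunc k) w.num -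
        algebraMap k[X] (RatFunc k) (derivative w.denom) / algebraMap k[X] (RatFunc k) w.denom := by
  have hnum := algebraMap_ne_zero (num_ne_zero hw)
  have hdenom := algebraMap_ne_zero w.denom_ne_zero
  conv_lhs => rw [ratDeriv]; enter [2]; rw [← num_div_denom w]
  field_simp

theorem algebraMap_derivative_div_eq_sum_roots {q : k[X]} (hq : q ≠ 0) (hs : q.Splits) :
    algebraMap k[X] (RatFunc k) (derivative q) / algebraMap k[X] (RatFunc k) q =
      (q.roots.map fun r => (X - C r)⁻¹).sum := by
  have heval : ∀ f : k[X], (f.map (algebraMap k (RatFunc k))).eval X = algebraMap _ _ f :=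
    fun f => by rw [eval_map_algebraMap, aeval_X_left_eq_algebraMap]
  have hne : (q.map (algebraMap k (RatFunc k))).eval X ≠ 0 := by
    rw [heval]
    exact algebraMap_ne_zero hq
  have := (hs.map (algebraMap k (RatFunc k))).eval_derivative_div_eval_of_ne_zero hne
  rw [derivative_map, heval, heval, hs.roots_map, Multiset.map_map] at this
  simpa [algebraMap_eq_C] using this

theorem algebraMap_derivative_div_mem_cartierFixed {p : ℕ} [ExpChar k p] [PerfectRing k p]
    {q : k[X]} (hq : q ≠ 0) (hs : q.Splits) :
    algebraMap k[X] (RatFunc k) (derivative q) / algebraMap k[X] (RatFunc k) q ∈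
      cartierFixed (RatFunc k) p X := by
  rw [algebraMap_derivative_div_eq_sum_roots hq hs]
  refine multiset_sum_mem _ fun g hg => ?_
  obtain ⟨r, -, rfl⟩ := Multiset.mem_map.mp hg
  refine inv_sub_mem_cartierFixed (b := C ((frobeniusEquiv k p).symm r)) ?_ ?_
  · rw [← algebraMap_X, ← algebraMap_C, ← map_sub]
    exact algebraMap_ne_zero (X_sub_C_ne_zero r)
  · rw [← map_pow, frobeniusEquiv_symm_pow_p]

end RatFunc

/-- Over an algebraically closed field of characteristic `p > 0`, the
Cartier operator fixes logarithmic differentials: for a nonzero rational function `w`,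
the logarithmic derivative `w'/w` decomposes as
`w'/w = ∑_{i≤p-2} f_i^p X^i + (w'/w)^p X^{p-1}`, i.e. its top Cartier component is
`w'/w` itself. -/
theorem cartier_fixes_logarithmic_differentials
    {k : Type*} [Field k] [IsAlgClosed k] (p : ℕ) [CharP k p] (hp : 0 < p)
    (w : RatFunc k) (hw : w ≠ 0) :
    ∃ c : Fin (p - 1) → RatFunc k,
      ratDeriv w / w =
        (∑ i : Fin (p - 1), (c i) ^ p * RatFunc.X ^ (i : ℕ))
          + (ratDeriv w / w) ^ p * RatFunc.X ^ (p - 1) := by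
  have : NeZero p := ⟨hp.ne'⟩
  have : Fact p.Prime := CharP.char_is_prime_of_pos k p
  rw [← mem_cartierFixed, RatFunc.ratDeriv_div_self hw]
  exact sub_mem
    (RatFunc.algebraMap_derivative_div_mem_cartierFixed (RatFunc.num_ne_zero hw)
      (IsAlgClosed.splits _))
    (RatFunc.algebraMap_derivative_div_mem_cartierFixed w.denom_ne_zero (IsAlgClosed.splits _))
end

section
/- Let k be an algebraically closed field of characteristic p > 0, let w, h \in k(X) with w' \neq 0, and let u \in k be nonzero. Then there exist F_0, \dots, F_{p-2} \in k(X) such that u \cdot (h' + w^{p-1} \cdot w') / (w')^p = \sum_{i=0}^{p-2} F_i^p \cdot X^i + u \cdot X^{p-1}. Equivalently, in the Cartier decomposition of u (h' + w^{p-1} w')/(w')^p, the top component F_{p-1} is the nonzero constant u^{1/p} \in k^{\times}; i.e. the Cartier operator sends the quasi-exact form u(dh + w^{p-1} dw), viewed relative to the Frobenius coordinate x = y^p via division by d(w^p)/dx = (w')^p, to a nonzero constant. -/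
set_option linter.unusedSectionVars false
set_option linter.unusedVariables false

namespace QEC

open Polynomial

variable {k : Type*} [Field k]

local notation "φ" => algebraMap (Polynomial k) (RatFunc k)

theorem ratDeriv_eq_div (N D : Polynomial k) (hD : D ≠ 0) :
    ratDeriv (φ N / φ D) =
      (φ (derivative N) * φ D - φ N * φ (derivative D)) / φ D ^ 2 := by
  set f : RatFunc k := φ N / φ D with hf
  have hd : f.denom ≠ 0 := f.denom_ne_zero
  have hD' : (φ D : RatFunc k) ≠ 0 := RatFunc.algebraMap_ne_zero hD
  have hd' : (φ f.denom : RatFunc k) ≠ 0 := RatFunc.algebraMap_ne_zero hd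
  have hrel : f.num * D = N * f.denom := by
    have e1 : φ f.num = f * φ f.denom := by
      have := (div_eq_iff hd').mp f.num_div_denom
      linear_combination this
    have e2 : φ N = f * φ D := by rw [hf, div_mul_cancel₀ _ hD']
    have h2 : φ (f.num * D) = φ (N * f.denom) := by
      rw [map_mul, map_mul, e1, e2]; ring
    exact RatFunc.algebraMap_injective k h2
  have hrel' : derivative f.num * D + f.num * derivative D
      = derivative N * f.denom + N * derivative f.denom := by
    have := congrArg derivative hrel
    simpa [derivative_mul] using this
  rw [ratDeriv]
  rw [div_eq_div_iff (pow_ne_zero 2 hd') (pow_ne_zero 2 hD')]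
  have key : (derivative f.num * f.denom - f.num * derivative f.denom) * D ^ 2
      = (derivative N * D - N * derivative D) * f.denom ^ 2 := by
    linear_combination (-(derivative f.denom) * D - derivative D * f.denom) * hrel
      + f.denom * D * hrel'
  calc (φ (derivative f.num) * φ f.denom - φ f.num * φ (derivative f.denom)) * φ D ^ 2
      = φ ((derivative f.num * f.denom - f.num * derivative f.denom) * D ^ 2) := by
        push_cast [map_mul, map_sub, map_pow]; ring
    _ = φ ((derivative N * D - N * derivative D) * f.denom ^ 2) := by rw [key]
    _ = (φ (derivative N) * φ D - φ N * φ (derivative D)) * φ f.denom ^ 2 := by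
        push_cast [map_mul, map_sub, map_pow]; ring


theorem ratDeriv_algebraMap (N : Polynomial k) : ratDeriv (φ N) = φ (derivative N) := by
  have := ratDeriv_eq_div N 1 (one_ne_zero (α := Polynomial k))
  simpa using this

theorem ratDeriv_C (c : k) : ratDeriv (RatFunc.C c) = 0 := by
  rw [← RatFunc.algebraMap_C, ratDeriv_algebraMap]; simp

theorem ratDeriv_one : ratDeriv (1 : RatFunc k) = 0 := by
  simpa using ratDeriv_C (1 : k)

theorem ratDeriv_zero : ratDeriv (0 : RatFunc k) = 0 := by
  simpa using ratDeriv_C (0 : k)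

theorem ratDeriv_X : ratDeriv (RatFunc.X : RatFunc k) = 1 := by
  rw [← RatFunc.algebraMap_X, ratDeriv_algebraMap]; simp

theorem num_mul_denom (f : RatFunc k) : φ f.num = f * φ f.denom := by
  have := (div_eq_iff (RatFunc.algebraMap_ne_zero f.denom_ne_zero)).mp f.num_div_denom
  linear_combination this

theorem ratDeriv_add_aux (N1 D1 N2 D2 : Polynomial k) (h1 : D1 ≠ 0) (h2 : D2 ≠ 0) :
    ratDeriv (φ N1 / φ D1 + φ N2 / φ D2)
      = ratDeriv (φ N1 / φ D1) + ratDeriv (φ N2 / φ D2) := by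
  have h1' : (φ D1 : RatFunc k) ≠ 0 := RatFunc.algebraMap_ne_zero h1
  have h2' : (φ D2 : RatFunc k) ≠ 0 := RatFunc.algebraMap_ne_zero h2
  rw [div_add_div _ _ h1' h2', ← map_mul, ← map_mul, ← map_mul, ← map_add,
    ratDeriv_eq_div _ _ (mul_ne_zero h1 h2), ratDeriv_eq_div _ _ h1, ratDeriv_eq_div _ _ h2]
  simp only [derivative_add, derivative_mul, map_add, map_mul]
  field_simp
  ring

theorem ratDeriv_add (f g : RatFunc k) :
    ratDeriv (f + g) = ratDeriv f + ratDeriv g := by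
  rw [← f.num_div_denom, ← g.num_div_denom]
  exact ratDeriv_add_aux _ _ _ _ f.denom_ne_zero g.denom_ne_zero

theorem ratDeriv_mul_aux (N1 D1 N2 D2 : Polynomial k) (h1 : D1 ≠ 0) (h2 : D2 ≠ 0) :
    ratDeriv (φ N1 / φ D1 * (φ N2 / φ D2))
      = ratDeriv (φ N1 / φ D1) * (φ N2 / φ D2) + φ N1 / φ D1 * ratDeriv (φ N2 / φ D2) := by
  have h1' : (φ D1 : RatFunc k) ≠ 0 := RatFunc.algebraMap_ne_zero h1
  have h2' : (φ D2 : RatFunc k) ≠ 0 := RatFunc.algebraMap_ne_zero h2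
  rw [div_mul_div_comm, ← map_mul, ← map_mul,
    ratDeriv_eq_div _ _ (mul_ne_zero h1 h2), ratDeriv_eq_div _ _ h1, ratDeriv_eq_div _ _ h2]
  simp only [derivative_mul, map_add, map_mul]
  field_simp
  ring

theorem ratDeriv_mul (f g : RatFunc k) :
    ratDeriv (f * g) = ratDeriv f * g + f * ratDeriv g := by
  rw [← f.num_div_denom, ← g.num_div_denom]
  exact ratDeriv_mul_aux _ _ _ _ f.denom_ne_zero g.denom_ne_zero

theorem ratDeriv_neg (f : RatFunc k) : ratDeriv (-f) = -ratDeriv f := by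
  have h : ratDeriv (f + -f) = 0 := by rw [add_neg_cancel, ratDeriv_zero]
  rw [ratDeriv_add] at h
  exact eq_neg_of_add_eq_zero_right h

theorem ratDeriv_sub (f g : RatFunc k) :
    ratDeriv (f - g) = ratDeriv f - ratDeriv g := by
  rw [sub_eq_add_neg, ratDeriv_add, ratDeriv_neg, sub_eq_add_neg]

theorem ratDeriv_pow (f : RatFunc k) (n : ℕ) :
    ratDeriv (f ^ n) = (n : RatFunc k) * f ^ (n - 1) * ratDeriv f := by
  induction n with
  | zero => simp [ratDeriv_one]
  | succ m ih =>
    rw [pow_succ, ratDeriv_mul, ih]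
    rcases Nat.eq_zero_or_pos m with hm | hm
    · subst hm; simp
    · have h1 : m - 1 + 1 = m := Nat.succ_pred_eq_of_pos hm
      have h2 : m + 1 - 1 = m := rfl
      rw [h2]
      push_cast
      calc (m : RatFunc k) * f ^ (m-1) * ratDeriv f * f + f ^ m * ratDeriv f
          = (m : RatFunc k) * (f ^ (m-1) * f) * ratDeriv f + f ^ m * ratDeriv f := by ring
        _ = ((m : RatFunc k) + 1) * f ^ m * ratDeriv f := by
            rw [← pow_succ, h1]; ring

theorem ratDeriv_inv (f : RatFunc k) (hf : f ≠ 0) :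
    ratDeriv f⁻¹ = -ratDeriv f / f ^ 2 := by
  have h : ratDeriv (f * f⁻¹) = 0 := by rw [mul_inv_cancel₀ hf, ratDeriv_one]
  rw [ratDeriv_mul] at h
  have h2 : f * ratDeriv f⁻¹ = -(ratDeriv f * f⁻¹) := by linear_combination h
  rw [eq_div_iff (pow_ne_zero 2 hf)]
  calc ratDeriv f⁻¹ * f ^ 2 = f * ratDeriv f⁻¹ * f := by ring
    _ = -(ratDeriv f * f⁻¹) * f := by rw [h2]
    _ = -(ratDeriv f * (f⁻¹ * f)) := by ring
    _ = -ratDeriv f := by rw [inv_mul_cancel₀ hf]; ring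


section Cartier

variable (p : ℕ) [hp : Fact p.Prime] [CharP k p]

theorem charP_ratFunc : CharP (RatFunc k) p :=
  charP_of_injective_algebraMap (algebraMap k (RatFunc k)).injective p

/-- `f` lies in the span of `pᵗʰ` powers times `X^i` for `i ≤ p - 2`. -/
def IsLow (f : RatFunc k) : Prop :=
  ∃ F : Fin (p - 1) → RatFunc k, f = ∑ i : Fin (p - 1), F i ^ p * RatFunc.X ^ (i : ℕ)

variable {p}

theorem isLow_zero : IsLow p (0 : RatFunc k) :=
  ⟨0, by simp [zero_pow hp.out.ne_zero]⟩

theorem isLow_add {f g : RatFunc k} (hf : IsLow p f) (hg : IsLow p g) :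
    IsLow p (f + g) := by
  haveI := charP_ratFunc (k := k) p
  obtain ⟨F, rfl⟩ := hf
  obtain ⟨G, rfl⟩ := hg
  refine ⟨F + G, ?_⟩
  rw [← Finset.sum_add_distrib]
  refine Finset.sum_congr rfl fun i _ => ?_
  rw [Pi.add_apply, add_pow_char, add_mul]

theorem isLow_neg {f : RatFunc k} (hf : IsLow p f) : IsLow p (-f) := by
  haveI := charP_ratFunc (k := k) p
  obtain ⟨F, rfl⟩ := hf
  refine ⟨-F, ?_⟩
  rw [← Finset.sum_neg_distrib]
  refine Finset.sum_congr rfl fun i _ => ?_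
  rw [Pi.neg_apply, neg_pow, neg_one_pow_char, neg_one_mul, neg_mul]

theorem isLow_pmul {f : RatFunc k} (g : RatFunc k) (hf : IsLow p f) :
    IsLow p (g ^ p * f) := by
  obtain ⟨F, rfl⟩ := hf
  refine ⟨fun i => g * F i, ?_⟩
  rw [Finset.mul_sum]
  refine Finset.sum_congr rfl fun i _ => ?_
  rw [mul_pow]; ring

theorem isLow_single (g : RatFunc k) {j : ℕ} (hj : j < p - 1) :
    IsLow p (g ^ p * RatFunc.X ^ j) := by
  refine ⟨fun i => if (i : ℕ) = j then g else 0, ?_⟩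
  rw [Finset.sum_eq_single (⟨j, hj⟩ : Fin (p - 1))]
  · simp
  · intro b _ hb
    have : (b : ℕ) ≠ j := fun h => hb (Fin.ext h)
    simp [this, zero_pow hp.out.ne_zero]
  · intro h; exact absurd (Finset.mem_univ _) h

theorem isLow_pow_mul_X (g : RatFunc k) (j : ℕ) (hj : j % p ≠ p - 1) :
    IsLow p (g ^ p * RatFunc.X ^ j) := by
  have hXj : (RatFunc.X : RatFunc k) ^ j
      = (RatFunc.X ^ (j / p)) ^ p * RatFunc.X ^ (j % p) := by
    conv_lhs => rw [← Nat.div_add_mod j p]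
    rw [pow_add, pow_mul']
  rw [hXj, ← mul_assoc, ← mul_pow]
  exact isLow_single _ (by have := Nat.mod_lt j hp.out.pos; omega)

theorem isLow_sum {ι : Type*} (s : Finset ι) (f : ι → RatFunc k)
    (h : ∀ i ∈ s, IsLow p (f i)) : IsLow p (∑ i ∈ s, f i) :=
  Finset.sum_induction f (IsLow p) (fun _ _ => isLow_add) isLow_zero h

theorem ratDeriv_pow_char (g : RatFunc k) : ratDeriv (g ^ p) = 0 := by
  haveI := charP_ratFunc (k := k) p
  rw [ratDeriv_pow, CharP.cast_eq_zero (RatFunc k) p, zero_mul, zero_mul]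

variable [IsAlgClosed k]

theorem exists_C_pow (c : k) : ∃ e : k, RatFunc.C c = RatFunc.C e ^ p := by
  obtain ⟨e, he⟩ := IsAlgClosed.exists_pow_nat_eq c hp.out.pos
  exact ⟨e, by rw [← map_pow, he]⟩

theorem isLow_deriv_poly (q : Polynomial k) : IsLow p (φ (derivative q)) := by
  induction q using Polynomial.induction_on' with
  | add f g hf hg => rw [derivative_add, map_add]; exact isLow_add hf hg
  | monomial n c =>
    rw [derivative_monomial, ← C_mul_X_pow_eq_monomial, map_mul, map_pow,
      RatFunc.algebraMap_C, RatFunc.algebraMap_X]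
    by_cases hpn : p ∣ n
    · have : ((n : k)) = 0 := (CharP.cast_eq_zero_iff k p n).mpr hpn
      rw [this, mul_zero, map_zero, zero_mul]
      exact isLow_zero
    · have hn0 : n % p ≠ 0 := fun h0 => hpn (Nat.dvd_of_mod_eq_zero h0)
      have hn1 : 1 ≤ n := by
        rcases Nat.eq_zero_or_pos n with h | h
        · exact absurd (h ▸ dvd_zero p) hpn
        · exact h
      obtain ⟨e, he⟩ := exists_C_pow (p := p) (c * (n : k))
      rw [he]
      apply isLow_pow_mul_X
      have hr : n % p < p := Nat.mod_lt _ hp.out.pos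
      have key : (n - 1) % p = n % p - 1 := by
        conv_lhs => rw [← Nat.div_add_mod n p]
        rw [Nat.add_sub_assoc (Nat.one_le_iff_ne_zero.mpr hn0), Nat.mul_add_mod,
          Nat.mod_eq_of_lt (by omega)]
      have hp2 : 2 ≤ p := hp.out.two_le
      omega

theorem isLow_ratDeriv (f : RatFunc k) : IsLow p (ratDeriv f) := by
  have hd' : (φ f.denom : RatFunc k) ≠ 0 := RatFunc.algebraMap_ne_zero f.denom_ne_zero
  have hpow : (φ f.denom : RatFunc k) * φ f.denom ^ (p - 1) = φ f.denom ^ p := by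
    rw [← pow_succ']
    congr 1
    have := hp.out.two_le
    omega
  have hrep : (φ f.denom)⁻¹ ^ p * φ (f.num * f.denom ^ (p - 1)) = f := by
    rw [map_mul, map_pow, num_mul_denom]
    calc (φ f.denom)⁻¹ ^ p * (f * φ f.denom * φ f.denom ^ (p - 1))
        = f * (φ f.denom * φ f.denom ^ (p - 1)) * ((φ f.denom) ^ p)⁻¹ := by
          rw [inv_pow]; ring
      _ = f * φ f.denom ^ p * ((φ f.denom) ^ p)⁻¹ := by rw [hpow]
      _ = f := by
          rw [mul_assoc, mul_inv_cancel₀ (pow_ne_zero p hd'), mul_one]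
  have := congrArg ratDeriv hrep
  rw [ratDeriv_mul, ratDeriv_pow_char, zero_mul, zero_add, ratDeriv_algebraMap] at this
  rw [← this]
  exact isLow_pmul _ (isLow_deriv_poly _)

variable (p)

/-- The key property of logarithmic derivatives. -/
def LogOK (w : RatFunc k) : Prop :=
  IsLow p (ratDeriv w / w - (ratDeriv w / w) ^ p * RatFunc.X ^ (p - 1))

theorem logOK_C (c : k) : LogOK p (RatFunc.C c) := by
  unfold LogOK
  rw [ratDeriv_C, zero_div, zero_pow hp.out.ne_zero, zero_mul, sub_zero]
  exact isLow_zero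

variable {p}

theorem logOK_mul {a b : RatFunc k} (ha : a ≠ 0) (hb : b ≠ 0)
    (La : LogOK p a) (Lb : LogOK p b) : LogOK p (a * b) := by
  haveI := charP_ratFunc (k := k) p
  have hlog : ratDeriv (a * b) / (a * b) = ratDeriv a / a + ratDeriv b / b := by
    rw [ratDeriv_mul]
    field_simp
  unfold LogOK
  rw [hlog, add_pow_char, add_mul, add_sub_add_comm]
  exact isLow_add La Lb

theorem logOK_inv {a : RatFunc k} (ha : a ≠ 0) (La : LogOK p a) : LogOK p a⁻¹ := by
  haveI := charP_ratFunc (k := k) p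
  have hlog : ratDeriv a⁻¹ / a⁻¹ = -(ratDeriv a / a) := by
    rw [ratDeriv_inv a ha]
    field_simp
  unfold LogOK
  rw [hlog]
  have heq : -(ratDeriv a / a) - (-(ratDeriv a / a)) ^ p * RatFunc.X ^ (p - 1)
      = -(ratDeriv a / a - (ratDeriv a / a) ^ p * RatFunc.X ^ (p - 1)) := by
    rw [neg_pow, neg_one_pow_char]
    ring
  rw [heq]
  exact isLow_neg La

theorem X_sub_C_ne_zero' (α : k) : (RatFunc.X - RatFunc.C α : RatFunc k) ≠ 0 := by
  rw [← RatFunc.algebraMap_X, ← RatFunc.algebraMap_C, ← map_sub]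
  exact RatFunc.algebraMap_ne_zero (Polynomial.X_sub_C_ne_zero α)

theorem logOK_linear (α : k) : LogOK p (RatFunc.X - RatFunc.C α) := by
  set Z : RatFunc k := RatFunc.X - RatFunc.C α with hZdef
  have hZ : Z ≠ 0 := X_sub_C_ne_zero' α
  have hd : ratDeriv Z = 1 := by
    rw [hZdef, ratDeriv_sub, ratDeriv_X, ratDeriv_C, sub_zero]
  have e : (Z⁻¹) ^ p * Z ^ (p - 1) = Z⁻¹ := by
    conv_lhs => rw [show p = (p - 1) + 1 from (Nat.succ_pred_eq_of_pos hp.out.pos).symm]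
    rw [pow_succ]
    calc Z⁻¹ ^ (p-1) * Z⁻¹ * Z ^ (p-1) = (Z⁻¹ * Z) ^ (p - 1) * Z⁻¹ := by
          rw [mul_pow]; ring
      _ = Z⁻¹ := by rw [inv_mul_cancel₀ hZ, one_pow, one_mul]
  have hsplit : ratDeriv Z / Z - (ratDeriv Z / Z) ^ p * RatFunc.X ^ (p - 1)
      = Z⁻¹ ^ p * (Z ^ (p - 1) - RatFunc.X ^ (p - 1)) := by
    rw [hd, mul_sub, e, one_div]
  unfold LogOK
  rw [hsplit]
  have hbinom : Z ^ (p - 1) - RatFunc.X ^ (p - 1)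
      = ∑ j ∈ Finset.range (p - 1),
          RatFunc.X ^ j * (-RatFunc.C α) ^ (p - 1 - j) * (((p-1).choose j : ℕ) : RatFunc k) := by
    have hpow : Z ^ (p - 1) = ∑ j ∈ Finset.range ((p - 1) + 1),
        RatFunc.X ^ j * (-RatFunc.C α) ^ (p - 1 - j) * (((p-1).choose j : ℕ) : RatFunc k) := by
      rw [hZdef, sub_eq_add_neg, add_pow]
    rw [hpow, Finset.sum_range_succ]
    simp
  rw [hbinom, Finset.mul_sum]
  apply isLow_sum
  intro j hj
  have hj' : j < p - 1 := Finset.mem_range.mp hj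
  have hconst : (-RatFunc.C α) ^ (p - 1 - j) * (((p-1).choose j : ℕ) : RatFunc k)
      = RatFunc.C ((-α) ^ (p - 1 - j) * ((p-1).choose j : ℕ)) := by
    rw [map_mul, map_pow, map_neg, map_natCast]
  obtain ⟨e', he'⟩ := exists_C_pow (p := p) ((-α) ^ (p - 1 - j) * (((p-1).choose j : ℕ) : k))
  have : Z⁻¹ ^ p * (RatFunc.X ^ j * (-RatFunc.C α) ^ (p - 1 - j) * (((p-1).choose j : ℕ) : RatFunc k))
      = (Z⁻¹ * RatFunc.C e') ^ p * RatFunc.X ^ j := by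
    rw [mul_assoc, hconst, he', mul_pow]
    ring
  rw [this]
  exact isLow_single _ hj'

theorem multiset_prod_ne_zero (s : Multiset k) :
    (s.map fun a => RatFunc.X - RatFunc.C a).prod ≠ 0 := by
  apply Multiset.prod_ne_zero
  intro h0
  obtain ⟨a, _, ha⟩ := Multiset.mem_map.mp h0
  exact X_sub_C_ne_zero' a ha

theorem logOK_multiset (s : Multiset k) :
    LogOK p ((s.map fun a => RatFunc.X - RatFunc.C a).prod) := by
  induction s using Multiset.induction_on with
  | empty => simpa using logOK_C p (1 : k)
  | cons a s ih =>
    rw [Multiset.map_cons, Multiset.prod_cons]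
    exact logOK_mul (X_sub_C_ne_zero' a) (multiset_prod_ne_zero s) (logOK_linear a) ih

theorem logOK_poly (q : Polynomial k) (hq : q ≠ 0) : LogOK p (φ q) := by
  have hsp : q.Splits := IsAlgClosed.splits q
  have hfac : φ q = RatFunc.C q.leadingCoeff
      * ((q.roots.map fun a => RatFunc.X - RatFunc.C a).prod) := by
    conv_lhs => rw [hsp.eq_prod_roots]
    rw [map_mul, RatFunc.algebraMap_C, map_multiset_prod, Multiset.map_map]
    have hmc : Multiset.map ((⇑(algebraMap (Polynomial k) (RatFunc k))) ∘ fun a => X - C a) q.roots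
        = Multiset.map (fun a => RatFunc.X - RatFunc.C a) q.roots :=
      Multiset.map_congr rfl fun a _ => by
        simp [RatFunc.algebraMap_X, RatFunc.algebraMap_C]
    rw [hmc]
  rw [hfac]
  have hlc : (RatFunc.C q.leadingCoeff : RatFunc k) ≠ 0 := by
    simpa using (Polynomial.leadingCoeff_ne_zero.mpr hq)
  exact logOK_mul hlc (multiset_prod_ne_zero _) (logOK_C p _) (logOK_multiset _)

theorem logOK_all (w : RatFunc k) (hw : w ≠ 0) : LogOK p w := by
  rw [← w.num_div_denom, div_eq_mul_inv]
  have hn : w.num ≠ 0 := RatFunc.num_ne_zero hw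
  have hd' : (φ w.denom : RatFunc k) ≠ 0 := RatFunc.algebraMap_ne_zero w.denom_ne_zero
  exact logOK_mul (RatFunc.algebraMap_ne_zero hn) (inv_ne_zero hd')
    (logOK_poly _ hn) (logOK_inv hd' (logOK_poly _ w.denom_ne_zero))

theorem main_aux {K : Type*} [Field K] (d hh x ce W : K) (hW : W ≠ 0) (hd : d ≠ 0) (m : ℕ) :
    ce^(m+1) * (hh + W^m*d)/d^(m+1) - ce^(m+1)*x
      = (ce/d)^(m+1)*hh + (ce*W/d)^(m+1) * (d/W - (d/W)^(m+1)*x) := by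
  have h1 : W * (d / W) = d := by rw [mul_comm, div_mul_cancel₀ _ hW]
  have h2 : ce / d * d = ce := div_mul_cancel₀ _ hd
  symm
  calc (ce/d)^(m+1)*hh + (ce*W/d)^(m+1) * (d/W - (d/W)^(m+1)*x)
      = (ce/d)^(m+1)*hh + (ce/d)^(m+1) * (W^(m+1) * (d/W))
          - (ce/d)^(m+1) * (W*(d/W))^(m+1) * x := by
        rw [show ce*W/d = ce/d*W from by ring, mul_pow, mul_pow]; ring
    _ = (ce/d)^(m+1)*hh + (ce/d)^(m+1) * (W^m * d) - ((ce/d)*d)^(m+1) * x := by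
        rw [show W^(m+1) * (d/W) = W^m * (W * (d/W)) from by rw [pow_succ]; ring, h1, mul_pow]
        try ring
    _ = (ce/d)^(m+1) * (hh + W^m*d) - ce^(m+1)*x := by rw [h2]; ring
    _ = ce^(m+1) * (hh + W^m*d)/d^(m+1) - ce^(m+1)*x := by rw [div_pow]; ring

end Cartier

end QEC

/-- Over an algebraically closed field of characteristic `p > 0`, let
`w, h ∈ k(X)` with `w' ≠ 0` and let `u ∈ k` be nonzero. Then
`u (h' + w^{p-1} w') / (w')^p = ∑_{i≤p-2} F_i^p X^i + u X^{p-1}` for some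
`F_0, …, F_{p-2} ∈ k(X)`: the quasi-exact form `u(dh + w^{p-1} dw)`, viewed relative to
the Frobenius coordinate `x = y^p`, has nonzero constant Cartier image. -/
theorem quasi_exact_cartier_constant
    {k : Type*} [Field k] [IsAlgClosed k] (p : ℕ) [CharP k p] (hp : 0 < p)
    (w h : RatFunc k) (hw : ratDeriv w ≠ 0) (u : k) (hu : u ≠ 0) :
    ∃ F : Fin (p - 1) → RatFunc k,
      RatFunc.C u * (ratDeriv h + w ^ (p - 1) * ratDeriv w) / (ratDeriv w) ^ p =
        (∑ i : Fin (p - 1), (F i) ^ p * RatFunc.X ^ (i : ℕ))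
          + RatFunc.C u * RatFunc.X ^ (p - 1) := by
  haveI : NeZero p := ⟨hp.ne'⟩
  haveI hfact : Fact p.Prime := CharP.char_is_prime_of_pos k p
  haveI := QEC.charP_ratFunc (k := k) p
  have hw0 : w ≠ 0 := fun h0 => hw (by rw [h0, QEC.ratDeriv_zero])
  obtain ⟨e, he⟩ := QEC.exists_C_pow (p := p) u
  have hq : p - 1 + 1 = p := Nat.succ_pred_eq_of_pos hp
  have main : RatFunc.C u * (ratDeriv h + w ^ (p - 1) * ratDeriv w) / (ratDeriv w) ^ p
        - RatFunc.C u * RatFunc.X ^ (p - 1)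
      = (RatFunc.C e / ratDeriv w) ^ p * ratDeriv h
        + (RatFunc.C e * w / ratDeriv w) ^ p
          * (ratDeriv w / w - (ratDeriv w / w) ^ p * RatFunc.X ^ (p - 1)) := by
    rw [he, ← hq]
    exact QEC.main_aux (ratDeriv w) (ratDeriv h) (RatFunc.X ^ (p-1)) (RatFunc.C e) w hw0 hw (p-1)
  have hislow : QEC.IsLow p (RatFunc.C u * (ratDeriv h + w ^ (p - 1) * ratDeriv w)
      / (ratDeriv w) ^ p - RatFunc.C u * RatFunc.X ^ (p - 1)) := by
    rw [main]
    exact QEC.isLow_add (QEC.isLow_pmul _ (QEC.isLow_ratDeriv h))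
      (QEC.isLow_pmul _ (QEC.logOK_all w hw0))
  obtain ⟨F, hF⟩ := hislow
  exact ⟨F, sub_eq_iff_eq_add.mp hF⟩
end

section
/- Let k be a field of characteristic p > 0, let h \in k(X) be a rational function with formal derivative h' \neq 0, and let a \in k. Let n \in \mathbb{Z} be the order of vanishing of h' at a, defined as the multiplicity of the root a in the numerator polynomial of h' minus the multiplicity of the root a in its denominator polynomial (in lowest terms). Then n is not congruent to -1 modulo p; in particular, the derivative of a rational function cannot have a zero or pole at a of order congruent to -1 modulo p. -/
open Polynomial in
/-- Polynomial case: the order of vanishing of `f'` at `a` is not `≡ -1 (mod p)`. -/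
lemma aux_poly_deriv_rm {k : Type*} [Field k] (p : ℕ) [CharP k p]
    (f : k[X]) (hf : derivative f ≠ 0) (a : k) :
    ¬ (p : ℕ) ∣ (rootMultiplicity a (derivative f) + 1) := by
  intro hdvd
  set G : k[X] := f.comp (X + C a) with hG
  have hdG : derivative G = (derivative f).comp (X + C a) := by
    simp [hG, derivative_comp]
  have hdGne : derivative G ≠ 0 := by
    rw [hdG]
    intro hc
    apply hf
    have := congrArg (fun q => q.comp (X - C a)) hc
    simpa [comp_assoc] using this
  set m := rootMultiplicity a (derivative f) with hm
  have hm' : m = (derivative G).natTrailingDegree := by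
    rw [hm, rootMultiplicity_eq_natTrailingDegree, hdG]
  have hcoeff : (derivative G).coeff m ≠ 0 := by
    rw [hm']
    exact trailingCoeff_nonzero_iff_nonzero.mpr hdGne
  rw [coeff_derivative] at hcoeff
  have hz : ((m : k) + 1) = 0 := by
    have := (CharP.cast_eq_zero_iff k p (m + 1)).mpr hdvd
    push_cast at this
    exact this
  rw [hz, mul_zero] at hcoeff
  exact hcoeff rfl

open Polynomial in
lemma aux_rm_pow {k : Type*} [Field k] (g : k[X]) (hg : g ≠ 0) (a : k) (n : ℕ) :
    rootMultiplicity a (g ^ n) = n * rootMultiplicity a g := by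
  induction n with
  | zero => simp [rootMultiplicity_eq_zero_iff, IsRoot]
  | succ n ih =>
      rw [pow_succ, rootMultiplicity_mul (mul_ne_zero (pow_ne_zero _ hg) hg), ih]
      ring

/-- Over a field of characteristic `p > 0`, the derivative of a rational
function cannot have a zero or pole of order congruent to `-1` modulo `p`: if `h' ≠ 0`
and `n` is the root multiplicity of `a` in the numerator of `h'` minus that in its
denominator, then `n ≢ -1 (mod p)`. -/
theorem derivative_order_ne_neg_one_mod_p
    {k : Type*} [Field k] (p : ℕ) [CharP k p] (hp : 0 < p)
    (h : RatFunc k) (hh : ratDeriv h ≠ 0) (a : k) :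
    ¬ (((Polynomial.rootMultiplicity a (ratDeriv h).num : ℤ) -
        (Polynomial.rootMultiplicity a (ratDeriv h).denom : ℤ)) ≡ -1 [ZMOD (p : ℤ)]) := by
  classical
  intro hmod
  have hprime : p.Prime := by
    rcases CharP.char_is_prime_or_zero k p with hpr | h0
    · exact hpr
    · omega
  have hp2 : 2 ≤ p := hprime.two_le
  set f := h.num with hf
  set g := h.denom with hgdef
  have hgne : g ≠ 0 := h.denom_ne_zero
  set N : Polynomial k := Polynomial.derivative f * g - f * Polynomial.derivative g with hN
  have hrd : ratDeriv h =
      algebraMap (Polynomial k) (RatFunc k) N / algebraMap (Polynomial k) (RatFunc k) (g ^ 2) := by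
    rw [ratDeriv, hN]
    push_cast [map_sub, map_mul, map_pow]
    rfl
  have hNne : N ≠ 0 := by
    intro hc
    apply hh
    rw [hrd, hc, map_zero, zero_div]
  -- cross multiplication
  have hcross : (ratDeriv h).num * g ^ 2 = N * (ratDeriv h).denom := by
    apply RatFunc.algebraMap_injective k
    have h1 : algebraMap (Polynomial k) (RatFunc k) (ratDeriv h).num /
        algebraMap (Polynomial k) (RatFunc k) (ratDeriv h).denom =
        algebraMap (Polynomial k) (RatFunc k) N /
        algebraMap (Polynomial k) (RatFunc k) (g ^ 2) := by
      rw [RatFunc.num_div_denom, hrd]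
    have h2 : algebraMap (Polynomial k) (RatFunc k) (ratDeriv h).num *
        algebraMap (Polynomial k) (RatFunc k) (g ^ 2) =
        algebraMap (Polynomial k) (RatFunc k) N *
        algebraMap (Polynomial k) (RatFunc k) (ratDeriv h).denom := by
      rw [← div_eq_div_iff]
      · exact h1
      · exact RatFunc.algebraMap_ne_zero (ratDeriv h).denom_ne_zero
      · exact RatFunc.algebraMap_ne_zero (pow_ne_zero _ hgne)
    simpa [map_mul] using h2
  have hnumne : (ratDeriv h).num ≠ 0 := RatFunc.num_ne_zero hh
  have hdenne : (ratDeriv h).denom ≠ 0 := (ratDeriv h).denom_ne_zero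
  -- root multiplicity additivity over the cross equation
  have hrm1 : Polynomial.rootMultiplicity a (ratDeriv h).num +
      2 * Polynomial.rootMultiplicity a g =
      Polynomial.rootMultiplicity a N + Polynomial.rootMultiplicity a (ratDeriv h).denom := by
    have e1 := Polynomial.rootMultiplicity_mul (x := a)
      (mul_ne_zero hnumne (pow_ne_zero 2 hgne))
    have e2 := Polynomial.rootMultiplicity_mul (x := a) (mul_ne_zero hNne hdenne)
    rw [hcross, e2] at e1
    rw [aux_rm_pow g hgne a 2] at e1
    omega
  -- the antiderivative trick : F = f * g^(p-1), F' = g^(p-2) * N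
  set F : Polynomial k := f * g ^ (p - 1) with hF
  have hcast : ((p - 1 : ℕ) : k) = -1 := by
    have : ((p : ℕ) : k) = 0 := CharP.cast_eq_zero k p
    rw [Nat.cast_sub hp, this, Nat.cast_one, zero_sub]
  have hdF : Polynomial.derivative F = g ^ (p - 2) * N := by
    have hexp : p - 1 = (p - 2) + 1 := by omega
    have hgp : g ^ (p - 1) = g ^ (p - 2) * g := by rw [hexp, pow_succ]
    have hsub : p - 1 - 1 = p - 2 := by omega
    have hcastP : ((p - 1 : ℕ) : Polynomial k) = -1 := by
      rw [← map_natCast (Polynomial.C : k →+* Polynomial k), hcast]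
      simp
    rw [hF, Polynomial.derivative_mul, Polynomial.derivative_pow,
      Polynomial.C_eq_natCast, hcastP, hsub, hgp, hN]
    ring
  have hdFne : Polynomial.derivative F ≠ 0 := by
    rw [hdF]; exact mul_ne_zero (pow_ne_zero _ hgne) hNne
  have hrm2 : Polynomial.rootMultiplicity a (Polynomial.derivative F) =
      (p - 2) * Polynomial.rootMultiplicity a g + Polynomial.rootMultiplicity a N := by
    rw [hdF, Polynomial.rootMultiplicity_mul (mul_ne_zero (pow_ne_zero _ hgne) hNne),
      aux_rm_pow g hgne a]
  -- conclude
  have hkey := aux_poly_deriv_rm p F hdFne a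
  apply hkey
  have hdvdZ : (p : ℤ) ∣ ((Polynomial.rootMultiplicity a (ratDeriv h).num : ℤ) -
      (Polynomial.rootMultiplicity a (ratDeriv h).denom : ℤ)) + 1 := by
    have hd := Int.ModEq.dvd hmod
    rw [show (-1 : ℤ) - ((Polynomial.rootMultiplicity a (ratDeriv h).num : ℤ) -
        (Polynomial.rootMultiplicity a (ratDeriv h).denom : ℤ)) =
        -(((Polynomial.rootMultiplicity a (ratDeriv h).num : ℤ) -
        (Polynomial.rootMultiplicity a (ratDeriv h).denom : ℤ)) + 1) from by ring,
      dvd_neg] at hd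
    exact hd
  -- rm F' + 1 = (num - denom) + 1 + p * rm g   (as integers)
  have hZ : ((Polynomial.rootMultiplicity a (Polynomial.derivative F) : ℤ) + 1) =
      (((Polynomial.rootMultiplicity a (ratDeriv h).num : ℤ) -
        (Polynomial.rootMultiplicity a (ratDeriv h).denom : ℤ)) + 1) +
      (p : ℤ) * (Polynomial.rootMultiplicity a g : ℤ) := by
    have h1 : ((Polynomial.rootMultiplicity a (ratDeriv h).num : ℤ) +
        2 * (Polynomial.rootMultiplicity a g : ℤ)) =
        (Polynomial.rootMultiplicity a N : ℤ) +
        (Polynomial.rootMultiplicity a (ratDeriv h).denom : ℤ) := by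
      exact_mod_cast congrArg (fun n : ℕ => (n : ℤ)) hrm1
    have h2 : (Polynomial.rootMultiplicity a (Polynomial.derivative F) : ℤ) =
        ((p : ℤ) - 2) * (Polynomial.rootMultiplicity a g : ℤ) +
        (Polynomial.rootMultiplicity a N : ℤ) := by
      have := congrArg (fun n : ℕ => (n : ℤ)) hrm2
      push_cast [Nat.cast_sub hp2] at this
      exact_mod_cast this
    linarith
  have : (p : ℤ) ∣ ((Polynomial.rootMultiplicity a (Polynomial.derivative F) : ℤ) + 1) := by
    rw [hZ]
    exact dvd_add hdvdZ (Dvd.intro _ rfl)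
  exact_mod_cast this
end

section
/- Let k be a field of characteristic 2 and let s, \mu \in k. Then in the rational function field k(X) the identity X \cdot (X - 1) \cdot (X - s^2) / (X - \mu)^2 = ((1 + s) \cdot X / (X - \mu))^2 + ((X - s)/(X - \mu))^2 \cdot X holds. In particular, in the Cartier decomposition f = f_0^2 + f_1^2 X of f = X(X-1)(X-\lambda)/(X-\mu)^2 with \lambda = s^2, the top component is f_1 = (X - s)/(X - \mu), which is a constant (so that f dX is quasi-exact) if and only if \mu = s = \sqrt{\lambda}. -/
/-- Over a field `k` of characteristic `2`, for `s, μ ∈ k` one has the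
identity `X(X-1)(X-s²)/(X-μ)² = ((1+s)X/(X-μ))² + ((X-s)/(X-μ))² ⬝ X` in `k(X)`: this is
the Cartier decomposition `f = f₀² + f₁² X` of `f = X(X-1)(X-λ)/(X-μ)²` with `λ = s²`,
whose top component `f₁ = (X-s)/(X-μ)` is a constant (so `f dX` is quasi-exact) if and
only if `μ = s = √λ`. -/
theorem cartier_decomposition_elliptic_example
    {k : Type*} [Field k] [CharP k 2] (s μ : k) :
    (RatFunc.X * (RatFunc.X - 1) * (RatFunc.X - RatFunc.C (s ^ 2)) /
        (RatFunc.X - RatFunc.C μ) ^ 2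
      = ((1 + RatFunc.C s) * RatFunc.X / (RatFunc.X - RatFunc.C μ)) ^ 2
        + ((RatFunc.X - RatFunc.C s) / (RatFunc.X - RatFunc.C μ)) ^ 2 * RatFunc.X)
    ∧ ((∃ c : k, (RatFunc.X - RatFunc.C s) / (RatFunc.X - RatFunc.C μ) = RatFunc.C c)
        ↔ μ = s) := by
  have hX : RatFunc.X - RatFunc.C μ ≠ (0 : RatFunc k) := by
    have : (RatFunc.X - RatFunc.C μ : RatFunc k)
        = algebraMap (Polynomial k) _ (Polynomial.X - Polynomial.C μ) := by
      simp [RatFunc.algebraMap_X, RatFunc.algebraMap_C]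
    rw [this]
    exact RatFunc.algebraMap_ne_zero (Polynomial.X_sub_C_ne_zero μ)
  have hk2 : (2 : k) = 0 := by exact_mod_cast CharP.cast_eq_zero k 2
  have h2 : (2 : RatFunc k) = 0 := by
    rw [show (2 : RatFunc k) = RatFunc.C 2 from (map_ofNat RatFunc.C 2).symm, hk2, map_zero]
  constructor
  · field_simp
    ring_nf
    linear_combination (-(RatFunc.X ^ 2) - RatFunc.X ^ 2 * RatFunc.C s ^ 2) * h2
      + (RatFunc.X - RatFunc.X ^ 2) * map_pow RatFunc.C s 2
  · constructor
    · rintro ⟨c, hc⟩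
      rw [div_eq_iff hX] at hc
      have hc' : (algebraMap (Polynomial k) (RatFunc k))
          (Polynomial.X - Polynomial.C s)
          = (algebraMap (Polynomial k) (RatFunc k))
          (Polynomial.C c * (Polynomial.X - Polynomial.C μ)) := by
        simpa [RatFunc.algebraMap_X, RatFunc.algebraMap_C] using hc
      have hp : (Polynomial.X - Polynomial.C s : Polynomial k)
          = Polynomial.C c * (Polynomial.X - Polynomial.C μ) :=
        IsFractionRing.injective (Polynomial k) (RatFunc k) hc'
      have h1 : (1 : k) = c := by
        have := congrArg (Polynomial.coeff · 1) hp
        simpa [mul_sub] using this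
      have h0 := congrArg (Polynomial.coeff · 0) hp
      simp [mul_sub, ← h1] at h0
      exact h0.symm
    · rintro rfl
      exact ⟨1, by rw [div_self hX, map_one RatFunc.C]⟩
end
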